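/- arXiv:2308.08397 — 4 statements merged into one kernel-verified Lean document; each statement's English description precedes it below -/
import Mathlib

section
/- Let $0 \leq k \leq i \leq j \leq n$ and let $A_{ab}$ denote the subspace inclusion matrices over $\mathbb{F}_q^n$. Then $A_{ij}A_{jk} = \sum_{m=0}^{k} c_{ijkm} A_{im} A_{mk}$, where $c_{ijkm} = \sum_{r=0}^{m} (-1)^{m-r} q^{\binom{r+1}{2} + \binom{m}{2} - rm} \binom{m}{r}_q \binom{n-i-k+r}{j-i-k+r}_q$. -/
open scoped Classical

/-- The Gaussian binomial coefficient `[a choose b]_q`, as a function of a real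
variable `q`. -/
noncomputable def qbinomR (q : ℝ) (a b : ℕ) : ℝ :=
  (∏ i ∈ Finset.range b, (q ^ (a - i) - 1)) / (∏ i ∈ Finset.range b, (q ^ (i + 1) - 1))

/-- The Gaussian binomial coefficient with integer indices, equal to `0` when `b < 0`
or `b > a`. -/
noncomputable def qbinomZ (q : ℝ) (a b : ℤ) : ℝ :=
  if 0 ≤ b ∧ b ≤ a then qbinomR q a.toNat b.toNat else 0

noncomputable instance (F : Type) [Field F] [Fintype F] (n : ℕ) :
    Fintype (Submodule F (Fin n → F)) := Fintype.ofFinite _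

/-- The subspace inclusion matrix `A_{ab}` over `𝔽_q^n`. -/
noncomputable def inclMatrix (F : Type) [Field F] [Fintype F] (n a b : ℕ) :
    Matrix {V : Submodule F (Fin n → F) // Module.finrank F V = a}
           {V : Submodule F (Fin n → F) // Module.finrank F V = b} ℝ :=
  fun U V => if U.1 ≤ V.1 ∨ V.1 ≤ U.1 then 1 else 0

noncomputable def qfact (q : ℝ) (N : ℕ) : ℝ := ∏ i ∈ Finset.range N, (q ^ (i + 1) - 1)

lemma qfact_pos {q : ℝ} (hq : 1 < q) (N : ℕ) : 0 < qfact q N :=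
  Finset.prod_pos fun i _ => sub_pos.2 (one_lt_pow₀ hq (Nat.succ_ne_zero i))

lemma qfact_ne_zero {q : ℝ} (hq : 1 < q) (N : ℕ) : qfact q N ≠ 0 :=
  (qfact_pos hq N).ne'

lemma qfact_succ (q : ℝ) (N : ℕ) : qfact q (N + 1) = qfact q N * (q ^ (N + 1) - 1) :=
  Finset.prod_range_succ _ _

lemma qbinomR_eq {q : ℝ} (hq : 1 < q) {a b : ℕ} (h : b ≤ a) :
    qbinomR q a b = qfact q a / (qfact q b * qfact q (a - b)) := by
  have hnum : (∏ i ∈ Finset.range b, (q ^ (a - i) - 1))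
      = ∏ i ∈ Finset.range b, (q ^ (a - b + i + 1) - 1) := by
    rw [← Finset.prod_range_reflect (fun i => q ^ (a - b + i + 1) - 1) b]
    refine Finset.prod_congr rfl fun i hi => ?_
    rw [Finset.mem_range] at hi
    congr 2
    omega
  have hfa : qfact q a = qfact q (a - b) * ∏ i ∈ Finset.range b, (q ^ (a - b + i + 1) - 1) := by
    conv_lhs => rw [show a = (a - b) + b by omega]
    rw [qfact, Finset.prod_range_add]
    rfl
  have h1 : qbinomR q a b
      = (∏ i ∈ Finset.range b, (q ^ (a - b + i + 1) - 1)) / qfact q b := by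
    rw [qbinomR, hnum]; rfl
  rw [h1, hfa]
  have hb := qfact_ne_zero hq b
  have hab := qfact_ne_zero hq (a - b)
  field_simp

lemma qbinomR_eq_zero {q : ℝ} {a b : ℕ} (h : a < b) : qbinomR q a b = 0 := by
  rw [qbinomR, Finset.prod_eq_zero (Finset.mem_range.2 h) (by simp), zero_div]

lemma qbinomR_zero (q : ℝ) (a : ℕ) : qbinomR q a 0 = 1 := by simp [qbinomR]

lemma qbinomR_self {q : ℝ} (hq : 1 < q) (a : ℕ) : qbinomR q a a = 1 := by
  rw [qbinomR_eq hq le_rfl, Nat.sub_self,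
    show qfact q 0 = 1 from Finset.prod_range_zero _, mul_one,
    div_self (qfact_ne_zero hq a)]

lemma qbinomR_pascal {q : ℝ} (hq : 1 < q) (s u : ℕ) :
    qbinomR q (s + u + 1) (s + 1)
      = q ^ (s + 1) * qbinomR q (s + u) (s + 1) + qbinomR q (s + u) s := by
  cases u with
  | zero =>
    simp only [Nat.add_zero]
    rw [qbinomR_self hq, qbinomR_eq_zero (Nat.lt_succ_self s), qbinomR_self hq]
    ring
  | succ u =>
    have h1 : qbinomR q (s + (u+1) + 1) (s + 1)
        = qfact q (s + u + 2) / (qfact q (s + 1) * qfact q (u + 1)) := by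
      rw [qbinomR_eq hq (by omega), show s + (u+1) + 1 - (s+1) = u + 1 by omega,
        show s + (u+1) + 1 = s + u + 2 by omega]
    have h2 : qbinomR q (s + (u+1)) (s + 1)
        = qfact q (s + u + 1) / (qfact q (s + 1) * qfact q u) := by
      rw [qbinomR_eq hq (by omega), show s + (u+1) - (s+1) = u by omega,
        show s + (u+1) = s + u + 1 by omega]
    have h3 : qbinomR q (s + (u+1)) s
        = qfact q (s + u + 1) / (qfact q s * qfact q (u + 1)) := by
      rw [qbinomR_eq hq (by omega), show s + (u+1) - s = u + 1 by omega,
        show s + (u+1) = s + u + 1 by omega]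
    rw [h1, h2, h3, show s + u + 2 = (s + u + 1) + 1 by omega, qfact_succ q (s+u+1),
      qfact_succ q s, qfact_succ q u]
    have hs := qfact_ne_zero hq s
    have hu := qfact_ne_zero hq u
    have hsu := qfact_ne_zero hq (s+u+1)
    have hqs : q ^ (s+1) - 1 ≠ 0 := sub_ne_zero.2 (one_lt_pow₀ hq (by omega)).ne'
    have hqu : q ^ (u+1) - 1 ≠ 0 := sub_ne_zero.2 (one_lt_pow₀ hq (by omega)).ne'
    field_simp
    ring

lemma qbinomR_pascal' {q : ℝ} (hq : 1 < q) {M s : ℕ} (h : s ≤ M) :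
    qbinomR q (M + 1) (s + 1)
      = q ^ (s + 1) * qbinomR q M (s + 1) + qbinomR q M s := by
  obtain ⟨u, rfl⟩ : ∃ u, M = s + u := ⟨M - s, by omega⟩
  exact qbinomR_pascal hq s u

lemma choose_two_succ (s : ℕ) : (s + 1).choose 2 = s.choose 2 + s := by
  rw [Nat.choose_succ_succ]
  simp [Nat.choose_one_right, Nat.add_comm]

lemma altsum {q : ℝ} (hq : 1 < q) (M : ℕ) :
    ∑ s ∈ Finset.range (M + 2), (-1 : ℝ) ^ s * q ^ (s.choose 2) * qbinomR q (M + 1) s = 0 := by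
  set u : ℕ → ℝ := fun s => (-1 : ℝ) ^ s * q ^ ((s + 1).choose 2) * qbinomR q M s with hu
  rw [Finset.sum_range_succ']
  have hterm : ∀ i ∈ Finset.range (M + 1),
      (-1 : ℝ) ^ (i+1) * q ^ ((i+1).choose 2) * qbinomR q (M + 1) (i+1) = u (i+1) - u i := by
    intro i hi
    rw [Finset.mem_range] at hi
    rw [qbinomR_pascal' hq (by omega)]
    have e1 : (i + 1 + 1).choose 2 = (i+1).choose 2 + (i+1) := choose_two_succ (i+1)
    simp only [hu, e1, pow_add, pow_succ]
    ring
  rw [Finset.sum_congr rfl hterm, Finset.sum_range_sub u (M + 1)]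
  have hu1 : u (M + 1) = 0 := by
    simp [hu, qbinomR_eq_zero (Nat.lt_succ_self M)]
  have hu0 : u 0 = 1 := by simp [hu, qbinomR_zero]
  simp [hu1, hu0, qbinomR_zero]

lemma altsum_trunc {q : ℝ} (hq : 1 < q) {N v : ℕ} (h : N < v) :
    ∑ s ∈ Finset.range v, (-1 : ℝ) ^ s * q ^ (s.choose 2) * qbinomR q N s
      = if N = 0 then 1 else 0 := by
  obtain ⟨w, rfl⟩ : ∃ w, v = (N + 1) + w := ⟨v - (N+1), by omega⟩
  rw [Finset.sum_range_add]
  have htail : ∀ i ∈ Finset.range w,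
      (-1 : ℝ) ^ (N + 1 + i) * q ^ ((N + 1 + i).choose 2) * qbinomR q N (N + 1 + i) = 0 := by
    intro i _
    rw [qbinomR_eq_zero (by omega), mul_zero]
  rw [Finset.sum_congr rfl htail, Finset.sum_const, smul_zero, add_zero]
  cases N with
  | zero => simp [qbinomR_zero]
  | succ M => rw [altsum hq M]; simp

lemma qbinomR_mul {q : ℝ} (hq : 1 < q) (t r s : ℕ) :
    qbinomR q t (r + s) * qbinomR q (r + s) r = qbinomR q t r * qbinomR q (t - r) s := by
  rcases lt_or_ge t r with h | h
  · rw [qbinomR_eq_zero (by omega), qbinomR_eq_zero h, zero_mul, zero_mul]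
  rcases lt_or_ge t (r + s) with h2 | h2
  · rw [qbinomR_eq_zero h2, qbinomR_eq_zero (show t - r < s by omega), zero_mul, mul_zero]
  · rw [qbinomR_eq hq h2, qbinomR_eq hq (by omega : r ≤ r + s), qbinomR_eq hq h,
      qbinomR_eq hq (by omega : s ≤ t - r),
      show r + s - r = s by omega, show t - r - s = t - (r + s) by omega]
    have h1 := qfact_ne_zero hq r
    have h2' := qfact_ne_zero hq s
    have h3 := qfact_ne_zero hq (t - (r+s))
    have h4 := qfact_ne_zero hq (r + s)
    have h5 := qfact_ne_zero hq (t - r)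
    field_simp

lemma inversion {q : ℝ} (hq : 1 < q) (k t : ℕ) (ht : t ≤ k) (f : ℕ → ℝ) :
    ∑ m ∈ Finset.range (k + 1),
      (∑ r ∈ Finset.range (m + 1),
        (-1 : ℝ) ^ (m - r) * q ^ ((m - r).choose 2) * qbinomR q m r * f r) * qbinomR q t m
      = f t := by
  have hg : ∀ m ∈ Finset.range (k+1),
      (∑ r ∈ Finset.range (m + 1),
        (-1 : ℝ) ^ (m - r) * q ^ ((m - r).choose 2) * qbinomR q m r * f r) * qbinomR q t m
      = ∑ r ∈ Finset.range (k + 1),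
        (-1 : ℝ) ^ (m - r) * q ^ ((m - r).choose 2) * qbinomR q m r * f r * qbinomR q t m := by
    intro m hm
    rw [Finset.mem_range] at hm
    rw [Finset.sum_mul]
    have hsub : Finset.range (m+1) ⊆ Finset.range (k+1) := Finset.range_subset_range.2 (by omega)
    apply Finset.sum_subset hsub
    intro r hr hrn
    rw [Finset.mem_range] at hr
    rw [Finset.mem_range, not_lt] at hrn
    rw [qbinomR_eq_zero (show m < r by omega)]
    ring
  rw [Finset.sum_congr rfl hg, Finset.sum_comm]
  have hr : ∀ r ∈ Finset.range (k + 1),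
      (∑ m ∈ Finset.range (k + 1),
        (-1 : ℝ) ^ (m - r) * q ^ ((m - r).choose 2) * qbinomR q m r * f r * qbinomR q t m)
      = if r = t then f t else 0 := by
    intro r hrk
    rw [Finset.mem_range] at hrk
    obtain ⟨v, hv⟩ : ∃ v, k + 1 = r + v := ⟨k + 1 - r, by omega⟩
    have hv1 : 1 ≤ v := by omega
    rw [hv, Finset.sum_range_add]
    have hhead : ∀ i ∈ Finset.range r,
        (-1 : ℝ) ^ (i - r) * q ^ ((i - r).choose 2) * qbinomR q i r * f r * qbinomR q t i
        = 0 := by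
      intro i hi
      rw [Finset.mem_range] at hi
      rw [qbinomR_eq_zero hi]
      ring
    rw [Finset.sum_congr rfl hhead, Finset.sum_const, smul_zero, zero_add]
    have htailterm : ∀ s : ℕ,
        (-1 : ℝ) ^ (r + s - r) * q ^ ((r + s - r).choose 2) * qbinomR q (r+s) r * f r
          * qbinomR q t (r+s)
        = qbinomR q t r * f r * ((-1:ℝ)^s * q ^ (s.choose 2) * qbinomR q (t - r) s) := by
      intro s
      rw [show r + s - r = s by omega]
      linear_combination ((-1:ℝ)^s * q ^ (s.choose 2) * f r) * qbinomR_mul hq t r s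
    rw [Finset.sum_congr rfl (fun s _ => htailterm s), ← Finset.mul_sum]
    rcases eq_or_ne r t with rfl | hne
    · rw [if_pos rfl, Nat.sub_self, altsum_trunc hq (show (0:ℕ) < v by omega),
        qbinomR_self hq]
      simp
    · rw [if_neg hne]
      rcases lt_or_ge r t with hlt | hge
      · rw [altsum_trunc hq (show t - r < v by omega), if_neg (by omega)]
        ring
      · rw [qbinomR_eq_zero (show t < r by omega)]
        ring
  rw [Finset.sum_congr rfl hr, Finset.sum_ite_eq' (Finset.range (k+1)) t (fun _ => f t),
    if_pos (Finset.mem_range.2 (by omega))]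

section Counting
open Module Submodule

variable {F : Type} [Field F] [Fintype F] {V : Type*} [AddCommGroup V] [Module F V]
  [Finite V]

/-- The fiber of the span map over a subspace `W` of dimension `m`. -/
noncomputable def fiberEquiv (m : ℕ) (W : Submodule F V) (hW : finrank F W = m) :
    {s : Fin m → V // LinearIndependent F s ∧ Submodule.span F (Set.range s) = W} ≃
      {t : Fin m → W // LinearIndependent F t} := by
  have hFD : FiniteDimensional F V := Module.Finite.of_finite
  exact {
    toFun := fun s => ⟨fun i => ⟨s.1 i, by
        have h := Submodule.subset_span (R := F) (Set.mem_range_self (f := s.1) i)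
        rwa [s.2.2] at h⟩,
      by
        apply LinearIndependent.of_comp W.subtype
        exact s.2.1⟩
    invFun := fun t => ⟨fun i => (t.1 i : V),
      by
        constructor
        · exact t.2.map' W.subtype (Submodule.ker_subtype W)
        · have h1 : (Set.range fun i => ((t.1 i : V))) = W.subtype '' Set.range t.1 := by
            ext x
            simp [Set.mem_image, Set.mem_range]
          rw [h1, Submodule.span_image,
            t.2.span_eq_top_of_card_eq_finrank' (by rw [Fintype.card_fin, hW]),
            Submodule.map_subtype_top]⟩
    left_inv := fun s => rfl
    right_inv := fun t => rfl }

lemma card_LI_eq (m : ℕ) :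
    Nat.card {s : Fin m → V // LinearIndependent F s}
      = Nat.card {W : Submodule F V // finrank F W = m}
        * ∏ i : Fin m, (Fintype.card F ^ m - Fintype.card F ^ (i : ℕ)) := by
  have hFD : FiniteDimensional F V := Module.Finite.of_finite
  set Φ : {s : Fin m → V // LinearIndependent F s} → {W : Submodule F V // finrank F W = m} :=
    fun s => ⟨Submodule.span F (Set.range s.1),
      by rw [finrank_span_eq_card s.2, Fintype.card_fin]⟩ with hΦ
  haveI : ∀ W : {W : Submodule F V // finrank F W = m}, Finite ↥W.1 := fun W => inferInstance
  rw [Nat.card_congr (Equiv.sigmaFiberEquiv Φ).symm]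
  haveI : Fintype {W : Submodule F V // finrank F W = m} := Fintype.ofFinite _
  haveI : ∀ W : {W : Submodule F V // finrank F W = m},
      Fintype {s : {s : Fin m → V // LinearIndependent F s} // Φ s = W} :=
    fun W => Fintype.ofFinite _
  haveI : Fintype {s : Fin m → V // LinearIndependent F s} := Fintype.ofFinite _
  rw [Nat.card_eq_fintype_card, Fintype.card_sigma]
  have hfib : ∀ W : {W : Submodule F V // finrank F W = m},
      Fintype.card {s : {s : Fin m → V // LinearIndependent F s} // Φ s = W}
        = ∏ i : Fin m, (Fintype.card F ^ m - Fintype.card F ^ (i : ℕ)) := by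
    intro W
    have e1 : {s : {s : Fin m → V // LinearIndependent F s} // Φ s = W}
        ≃ {s : Fin m → V // LinearIndependent F s ∧ Submodule.span F (Set.range s) = W.1} :=
      (Equiv.subtypeEquivRight (fun s => by
        rw [hΦ]
        constructor
        · intro h; exact congrArg Subtype.val h
        · intro h; exact Subtype.ext h)).trans
        (Equiv.subtypeSubtypeEquivSubtypeInter _ _)
    have e2 := (e1.trans (fiberEquiv m W.1 W.2))
    rw [← Nat.card_eq_fintype_card, Nat.card_congr e2]
    have := card_linearIndependent (K := F) (V := ↥W.1) (k := m) (by rw [W.2])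
    rw [this, W.2]
  rw [Finset.sum_congr rfl (fun W _ => hfib W), Finset.sum_const, Finset.card_univ,
    smul_eq_mul, Nat.card_eq_fintype_card]

lemma prod_real {q : ℝ} (N m : ℕ) (hm : m ≤ N) :
    ∏ i ∈ Finset.range m, (q ^ N - q ^ i)
      = q ^ (m.choose 2) * ∏ i ∈ Finset.range m, (q ^ (N - i) - 1) := by
  have hfac : ∀ i ∈ Finset.range m, q ^ N - q ^ i = q ^ i * (q ^ (N - i) - 1) := by
    intro i hi
    rw [Finset.mem_range] at hi
    rw [mul_sub, mul_one, ← pow_add, show i + (N - i) = N by omega]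
  rw [Finset.prod_congr rfl hfac, Finset.prod_mul_distrib, Finset.prod_pow_eq_pow_sum]
  congr 2
  have h1 := Finset.sum_range_id_mul_two m
  have h2 := Nat.choose_two_right m
  omega

lemma prod_qfact {q : ℝ} (m : ℕ) :
    ∏ i ∈ Finset.range m, (q ^ (m - i) - 1) = qfact q m := by
  rw [qfact, ← Finset.prod_range_reflect (fun i => q ^ (i + 1) - 1) m]
  refine Finset.prod_congr rfl fun i hi => ?_
  rw [Finset.mem_range] at hi
  congr 2
  omega

lemma qbinomR_ratio {q : ℝ} (hq : 1 < q) {N m : ℕ} (hm : m ≤ N) :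
    qbinomR q N m * ∏ i ∈ Finset.range m, (q ^ m - q ^ i)
      = ∏ i ∈ Finset.range m, (q ^ N - q ^ i) := by
  rw [prod_real N m hm, prod_real m m le_rfl, prod_qfact, qbinomR]
  rw [show (∏ i ∈ Finset.range m, (q ^ (i + 1) - 1)) = qfact q m from rfl]
  have h := qfact_ne_zero hq m
  field_simp

lemma card_submodule (m : ℕ) :
    (Nat.card {W : Submodule F V // finrank F W = m} : ℝ)
      = qbinomR (Fintype.card F) (finrank F V) m := by
  have hFD : FiniteDimensional F V := Module.Finite.of_finite
  have hq1 : (1 : ℝ) < Fintype.card F := by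
    exact_mod_cast Fintype.one_lt_card
  set q : ℕ := Fintype.card F with hqdef
  set N := finrank F V with hN
  rcases le_or_gt m N with hm | hm
  · have hcount := card_LI_eq (F := F) (V := V) m
    have hLI := card_linearIndependent (K := F) (V := V) (k := m) (by rw [← hN]; exact hm)
    rw [hLI] at hcount
    -- cast to ℝ
    have hcast : ∀ M : ℕ, m ≤ M → ((∏ i : Fin m, (q ^ M - q ^ (i : ℕ)) : ℕ) : ℝ)
        = ∏ i ∈ Finset.range m, ((q : ℝ) ^ M - (q : ℝ) ^ i) := by
      intro M hM
      rw [← Fin.prod_univ_eq_prod_range (fun i => ((q : ℝ) ^ M - (q : ℝ) ^ i)) m,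
        Nat.cast_prod]
      refine Finset.prod_congr rfl fun i _ => ?_
      rw [Nat.cast_sub (Nat.pow_le_pow_right (by positivity) (by omega))]
      push_cast
      ring_nf
    have hreal : (Nat.card {W : Submodule F V // finrank F W = m} : ℝ)
        * ∏ i ∈ Finset.range m, ((q : ℝ) ^ m - (q : ℝ) ^ i)
        = ∏ i ∈ Finset.range m, ((q : ℝ) ^ N - (q : ℝ) ^ i) := by
      rw [← hcast m le_rfl, ← hcast N hm, ← Nat.cast_mul, ← hcount]
    have hPm : (∏ i ∈ Finset.range m, ((q : ℝ) ^ m - (q : ℝ) ^ i)) ≠ 0 := by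
      refine Finset.prod_ne_zero_iff.2 fun i hi => ?_
      rw [Finset.mem_range] at hi
      have : (q : ℝ) ^ i < (q : ℝ) ^ m := pow_lt_pow_right₀ hq1 hi
      intro h
      nlinarith
    have hratio := qbinomR_ratio hq1 hm
    apply mul_right_cancel₀ hPm
    rw [hreal, hratio]
  · have he : IsEmpty {W : Submodule F V // finrank F W = m} := by
      constructor
      intro W
      have := W.1.finrank_le
      omega
    rw [Nat.card_of_isEmpty, qbinomR_eq_zero hm, Nat.cast_zero]

lemma card_le_dim (X : Submodule F V) (m : ℕ) :
    (Nat.card {W : Submodule F V // finrank F W = m ∧ W ≤ X} : ℝ)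
      = qbinomR (Fintype.card F) (finrank F X) m := by
  have hFD : FiniteDimensional F V := Module.Finite.of_finite
  rw [← card_submodule (F := F) (V := ↥X) m]
  congr 1
  apply Nat.card_congr
  exact {
    toFun := fun W => ⟨Submodule.comap X.subtype W.1, by
      rw [(Submodule.comapSubtypeEquivOfLe W.2.2).finrank_eq]; exact W.2.1⟩
    invFun := fun W' => ⟨Submodule.map X.subtype W'.1, by
      rw [Submodule.finrank_map_subtype_eq]; exact W'.2,
      Submodule.map_subtype_le X W'.1⟩
    left_inv := fun W => by
      apply Subtype.ext
      show Submodule.map X.subtype (Submodule.comap X.subtype W.1) = W.1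
      rw [Submodule.map_comap_subtype, inf_of_le_right W.2.2]
    right_inv := fun W' => by
      apply Subtype.ext
      exact Submodule.comap_map_eq_of_injective (by exact Subtype.val_injective) W'.1 }

lemma finrank_comap_mkQ (X : Submodule F V) (W' : Submodule F (V ⧸ X)) :
    finrank F (Submodule.comap X.mkQ W') = finrank F W' + finrank F X := by
  have hFD : FiniteDimensional F V := Module.Finite.of_finite
  set U := Submodule.comap X.mkQ W' with hU
  have hXU : X ≤ U := Submodule.le_comap_mkQ X W'
  have hf := LinearMap.finrank_range_add_finrank_ker (X.mkQ.comp U.subtype)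
  have hrange : LinearMap.range (X.mkQ.comp U.subtype) = W' := by
    rw [LinearMap.range_comp, Submodule.range_subtype]
    rw [hU, Submodule.map_comap_eq, Submodule.range_mkQ, top_inf_eq]
  have hker : finrank F ↥(LinearMap.ker (X.mkQ.comp U.subtype)) = finrank F X := by
    have h1 : LinearMap.ker (X.mkQ.comp U.subtype) = Submodule.comap U.subtype X := by
      rw [LinearMap.ker_comp, Submodule.ker_mkQ]
    rw [h1]
    exact (Submodule.comapSubtypeEquivOfLe hXU).finrank_eq
  rw [hrange, hker] at hf
  exact hf.symm

lemma card_ge_dim (X : Submodule F V) (j : ℕ) (hd : finrank F X ≤ j) :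
    (Nat.card {W : Submodule F V // finrank F W = j ∧ X ≤ W} : ℝ)
      = qbinomR (Fintype.card F) (finrank F V - finrank F X) (j - finrank F X) := by
  have hFD : FiniteDimensional F V := Module.Finite.of_finite
  haveI : Finite (V ⧸ X) := Quotient.finite _
  have hquot : finrank F (V ⧸ X) = finrank F V - finrank F X := by
    have := Submodule.finrank_quotient_add_finrank X
    omega
  rw [← hquot, ← card_submodule (F := F) (V := V ⧸ X) (j - finrank F X)]
  congr 1
  apply Nat.card_congr
  have e1 : {W : Submodule F V // finrank F W = j ∧ X ≤ W}
      ≃ {W' : Submodule F (V ⧸ X) // finrank F W' + finrank F X = j} := {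
    toFun := fun W => ⟨Submodule.map X.mkQ W.1, by
      have h1 : Submodule.comap X.mkQ (Submodule.map X.mkQ W.1) = W.1 := by
        rw [Submodule.comap_map_mkQ, sup_eq_right.2 W.2.2]
      have h2 := finrank_comap_mkQ X (Submodule.map X.mkQ W.1)
      rw [h1] at h2
      omega⟩
    invFun := fun W' => ⟨Submodule.comap X.mkQ W'.1, by
      rw [finrank_comap_mkQ]; exact W'.2, Submodule.le_comap_mkQ X W'.1⟩
    left_inv := fun W => by
      apply Subtype.ext
      show Submodule.comap X.mkQ (Submodule.map X.mkQ W.1) = W.1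
      rw [Submodule.comap_map_mkQ, sup_eq_right.2 W.2.2]
    right_inv := fun W' => by
      apply Subtype.ext
      show Submodule.map X.mkQ (Submodule.comap X.mkQ W'.1) = W'.1
      apply Submodule.map_comap_eq_self
      rw [Submodule.range_mkQ]
      exact le_top }
  refine e1.trans (Equiv.subtypeEquivRight fun W' => by omega)

lemma card_ge_dim_empty (X : Submodule F V) (j : ℕ) (hd : j < finrank F X) :
    Nat.card {W : Submodule F V // finrank F W = j ∧ X ≤ W} = 0 := by
  have hFD : FiniteDimensional F V := Module.Finite.of_finite
  have he : IsEmpty {W : Submodule F V // finrank F W = j ∧ X ≤ W} := by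
    constructor
    intro W
    have := Submodule.finrank_mono W.2.2
    omega
  exact Nat.card_of_isEmpty

end Counting

section Final
open Module Submodule

variable {F : Type} [Field F] [Fintype F]

lemma entry_left {n i j k : ℕ} (hij : i ≤ j) (hkj : k ≤ j)
    (U : {V : Submodule F (Fin n → F) // finrank F V = i})
    (Vk : {V : Submodule F (Fin n → F) // finrank F V = k}) :
    (inclMatrix F n i j * inclMatrix F n j k) U Vk
      = Nat.card {W : Submodule F (Fin n → F) // finrank F W = j ∧ U.1 ⊔ Vk.1 ≤ W} := by
  have hFD : FiniteDimensional F (Fin n → F) := Module.Finite.of_finite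
  rw [Matrix.mul_apply]
  have hterm : ∀ W : {V : Submodule F (Fin n → F) // finrank F V = j},
      inclMatrix F n i j U W * inclMatrix F n j k W Vk
        = if U.1 ⊔ Vk.1 ≤ W.1 then (1:ℝ) else 0 := by
    intro W
    have h1 : (U.1 ≤ W.1 ∨ W.1 ≤ U.1) ↔ U.1 ≤ W.1 := by
      constructor
      · rintro (h | h)
        · exact h
        · have h' : W.1 = U.1 :=
            Submodule.eq_of_le_of_finrank_le h (by rw [U.2, W.2]; exact hij)
          rw [h']
      · exact Or.inl
    have h2 : (W.1 ≤ Vk.1 ∨ Vk.1 ≤ W.1) ↔ Vk.1 ≤ W.1 := by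
      constructor
      · rintro (h | h)
        · have h' : W.1 = Vk.1 :=
            Submodule.eq_of_le_of_finrank_le h (by rw [Vk.2, W.2]; exact hkj)
          rw [← h']
        · exact h
      · exact Or.inr
    simp only [inclMatrix]
    rw [if_congr h1 rfl rfl, if_congr h2 rfl rfl, ite_zero_mul_ite_zero, one_mul]
    exact if_congr (by rw [sup_le_iff]) rfl rfl
  rw [Finset.sum_congr rfl fun W _ => hterm W, Finset.sum_boole]
  congr 1
  rw [← Fintype.card_subtype, ← Nat.card_eq_fintype_card]
  exact Nat.card_congr (Equiv.subtypeSubtypeEquivSubtypeInter _ _)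

lemma entry_right {n i m k : ℕ} (hmi : m ≤ i) (hmk : m ≤ k)
    (U : {V : Submodule F (Fin n → F) // finrank F V = i})
    (Vk : {V : Submodule F (Fin n → F) // finrank F V = k}) :
    (inclMatrix F n i m * inclMatrix F n m k) U Vk
      = Nat.card {W : Submodule F (Fin n → F) // finrank F W = m ∧ W ≤ U.1 ⊓ Vk.1} := by
  have hFD : FiniteDimensional F (Fin n → F) := Module.Finite.of_finite
  rw [Matrix.mul_apply]
  have hterm : ∀ W : {V : Submodule F (Fin n → F) // finrank F V = m},
      inclMatrix F n i m U W * inclMatrix F n m k W Vk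
        = if W.1 ≤ U.1 ⊓ Vk.1 then (1:ℝ) else 0 := by
    intro W
    have h1 : (U.1 ≤ W.1 ∨ W.1 ≤ U.1) ↔ W.1 ≤ U.1 := by
      constructor
      · rintro (h | h)
        · have h' : U.1 = W.1 :=
            Submodule.eq_of_le_of_finrank_le h (by rw [U.2, W.2]; exact hmi)
          rw [h']
        · exact h
      · exact Or.inr
    have h2 : (W.1 ≤ Vk.1 ∨ Vk.1 ≤ W.1) ↔ W.1 ≤ Vk.1 := by
      constructor
      · rintro (h | h)
        · exact h
        · have h' : Vk.1 = W.1 :=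
            Submodule.eq_of_le_of_finrank_le h (by rw [Vk.2, W.2]; exact hmk)
          rw [← h']
      · exact Or.inl
    simp only [inclMatrix]
    rw [if_congr h1 rfl rfl, if_congr h2 rfl rfl, ite_zero_mul_ite_zero, one_mul]
    exact if_congr (by rw [le_inf_iff]) rfl rfl
  rw [Finset.sum_congr rfl fun W _ => hterm W, Finset.sum_boole]
  congr 1
  rw [← Fintype.card_subtype, ← Nat.card_eq_fintype_card]
  exact Nat.card_congr (Equiv.subtypeSubtypeEquivSubtypeInter
    (fun V : Submodule F (Fin n → F) => finrank F V = m) (fun V => V ≤ U.1 ⊓ Vk.1))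

lemma choose_arith (r s : ℕ) :
    (r + 1).choose 2 + (r + s).choose 2 = s.choose 2 + r * (r + s) := by
  induction r with
  | zero => simp
  | succ r ih =>
    have e1 : (r + 1 + 1).choose 2 = (r + 1).choose 2 + (r + 1) := choose_two_succ (r + 1)
    have e2 : (r + 1 + s).choose 2 = (r + s).choose 2 + (r + s) := by
      rw [show r + 1 + s = (r + s) + 1 by omega]; exact choose_two_succ (r + s)
    have e3 : (r + 1) * (r + 1 + s) = r * (r + s) + (r + 1) + (r + s) := by ring
    rw [e1, e2, e3]
    omega

lemma exponent_eq {m r : ℕ} (h : r ≤ m) :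
    (((r + 1).choose 2 + m.choose 2 : ℕ) : ℤ) - (r : ℤ) * (m : ℤ)
      = ((m - r).choose 2 : ℤ) := by
  obtain ⟨s, rfl⟩ : ∃ s, m = r + s := ⟨m - r, by omega⟩
  have := choose_arith r s
  have hs : r + s - r = s := by omega
  rw [hs]
  push_cast
  push_cast at this
  linarith [this]

end Final


/-- For `0 ≤ k ≤ i ≤ j ≤ n`:
`A_{ij} A_{jk} = ∑_{m=0}^{k} c_{ijkm} A_{im} A_{mk}`, where
`c_{ijkm} = ∑_{r=0}^{m} (-1)^{m-r} q^{C(r+1,2)+C(m,2)-rm} [m choose r]_q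
  [n-i-k+r choose j-i-k+r]_q`. -/
theorem incl_product_expansion (q : ℕ) (F : Type) [Field F] [Fintype F]
    (hq : Fintype.card F = q) (n i j k : ℕ) (hki : k ≤ i) (hij : i ≤ j) (hjn : j ≤ n) :
    inclMatrix F n i j * inclMatrix F n j k =
      ∑ m ∈ Finset.range (k + 1),
        (∑ r ∈ Finset.range (m + 1),
          (-1 : ℝ) ^ (m - r) * (q : ℝ) ^ ((((r + 1).choose 2 + m.choose 2 : ℕ) : ℤ) - r * m) *
            qbinomR q m r *
            qbinomZ q ((n : ℤ) - i - k + r) ((j : ℤ) - i - k + r)) •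
          (inclMatrix F n i m * inclMatrix F n m k) := by
  open Module Submodule in
  subst hq
  have hFD : FiniteDimensional F (Fin n → F) := Module.Finite.of_finite
  have hq1 : (1 : ℝ) < (Fintype.card F : ℝ) := by exact_mod_cast Fintype.one_lt_card
  have hN : finrank F (Fin n → F) = n := by simp
  ext U Vk
  rw [Matrix.sum_apply]
  set t := finrank F ↥(U.1 ⊓ Vk.1) with hts
  have ht : t ≤ k := by
    rw [← Vk.2]
    exact Submodule.finrank_mono inf_le_right
  set d := finrank F ↥(U.1 ⊔ Vk.1) with hds
  have hdt : d + t = i + k := by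
    rw [hds, hts, Submodule.finrank_sup_add_finrank_inf_eq, U.2, Vk.2]
  have hdn : d ≤ n := by rw [← hN]; exact Submodule.finrank_le _
  set f : ℕ → ℝ := fun r =>
    qbinomZ (Fintype.card F) ((n : ℤ) - i - k + r) ((j : ℤ) - i - k + r) with hf
  have hRHS : ∀ m ∈ Finset.range (k + 1),
      ((∑ r ∈ Finset.range (m + 1),
          (-1 : ℝ) ^ (m - r) * (Fintype.card F : ℝ) ^
              ((((r + 1).choose 2 + m.choose 2 : ℕ) : ℤ) - (r : ℤ) * (m : ℤ)) *
            qbinomR (Fintype.card F) m r *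
            qbinomZ (Fintype.card F) ((n : ℤ) - i - k + r) ((j : ℤ) - i - k + r)) •
          (inclMatrix F n i m * inclMatrix F n m k)) U Vk
        = (∑ r ∈ Finset.range (m + 1),
            (-1 : ℝ) ^ (m - r) * (Fintype.card F : ℝ) ^ ((m - r).choose 2) *
              qbinomR (Fintype.card F) m r * f r) * qbinomR (Fintype.card F) t m := by
    intro m hm
    rw [Finset.mem_range] at hm
    rw [Matrix.smul_apply, smul_eq_mul]
    have hcoef : ∀ r ∈ Finset.range (m + 1),
        (-1 : ℝ) ^ (m - r) * (Fintype.card F : ℝ) ^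
            ((((r + 1).choose 2 + m.choose 2 : ℕ) : ℤ) - (r : ℤ) * (m : ℤ)) *
          qbinomR (Fintype.card F) m r *
          qbinomZ (Fintype.card F) ((n : ℤ) - i - k + r) ((j : ℤ) - i - k + r)
        = (-1 : ℝ) ^ (m - r) * (Fintype.card F : ℝ) ^ ((m - r).choose 2) *
            qbinomR (Fintype.card F) m r * f r := by
      intro r hr
      rw [Finset.mem_range] at hr
      rw [exponent_eq (by omega : r ≤ m), zpow_natCast, hf]
    rw [Finset.sum_congr rfl hcoef]
    congr 1
    rw [entry_right (show m ≤ i by omega) (show m ≤ k by omega) U Vk]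
    have hc := card_le_dim (F := F) (V := Fin n → F) (U.1 ⊓ Vk.1) m
    rw [← hts] at hc
    exact hc
  rw [Finset.sum_congr rfl hRHS, inversion hq1 k t ht f]
  rw [entry_left hij (show k ≤ j by omega) U Vk]
  have hft : f t = qbinomZ (Fintype.card F) ((n : ℤ) - i - k + t) ((j : ℤ) - i - k + t) := rfl
  rw [hft]
  rcases le_or_gt d j with hdj | hdj
  · have hXa := card_ge_dim (F := F) (V := Fin n → F) (U.1 ⊔ Vk.1) j (hds ▸ hdj)
    rw [← hds, hN] at hXa
    rw [hXa]
    simp only [qbinomZ]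
    rw [if_pos (by constructor <;> omega)]
    congr 1 <;> omega
  · have hXe := card_ge_dim_empty (F := F) (V := Fin n → F) (U.1 ⊔ Vk.1) j (hds ▸ hdj)
    rw [hXe, Nat.cast_zero]
    simp only [qbinomZ]
    rw [if_neg (by omega)]
end

section
/- Let $m \geq 2$ and $\ell \leq m$ with $m - \ell$ even. The number of permutations $\pi \in S_m$ with exactly $\ell$ fixed points and $c(\pi) = (m-\ell)/2$, where $c(\pi) = \sum_{i:\pi(i)>i}(\pi(i)-i)$, equals $\binom{(m+\ell)/2}{\ell}$. Equivalently, these are exactly the permutations that are products of $(m-\ell)/2$ disjoint adjacent transpositions $(i, i+1)$. -/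
/-!
Since `∑ i, (π i - i) = 0`, the depth `c(π)` of a permutation is also its total downward
displacement `∑_{π i < i} (i - π i)`. Each of the `m - ℓ` non-fixed points moves by at least one,
so `m - ℓ ≤ 2 c(π)`, with equality exactly when every point moves by at most one. Such a
permutation is an involution exchanging disjoint adjacent pairs `{i, i + 1}`, so it is determined
by the left ends of these pairs: `k = (m - ℓ) / 2` non-overlapping dominoes in a row of `m` cells.
Whether the last two cells carry a domino gives Pascal's recurrence, and the count is
`C(m - k, k) = C((m + ℓ) / 2, ℓ)`.
-/

open Finset

def dominoPlacements (n k : ℕ) : Finset (Finset ℕ) :=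
  (powersetCard k (range n)).filter fun S => ∀ i ∈ S, i + 1 < n ∧ i + 1 ∉ S

theorem mem_dominoPlacements {n k : ℕ} {S : Finset ℕ} :
    S ∈ dominoPlacements n k ↔ #S = k ∧ ∀ i ∈ S, i + 1 < n ∧ i + 1 ∉ S := by
  simp only [dominoPlacements, mem_filter, mem_powersetCard, and_congr_left_iff,
    and_iff_right_iff_imp]
  exact fun h _ i hi => mem_range.2 (by have := (h i hi).1; omega)

theorem filter_notMem_dominoPlacements (n k : ℕ) :
    (dominoPlacements (n + 2) k).filter (n ∉ ·) = dominoPlacements (n + 1) k := by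
  ext S
  simp only [mem_filter, mem_dominoPlacements]
  grind

theorem card_filter_mem_dominoPlacements (n k : ℕ) :
    #((dominoPlacements (n + 2) (k + 1)).filter (n ∈ ·)) = #(dominoPlacements n k) := by
  apply card_nbij' (·.erase n) (insert n)
  · intro S hS
    simp only [coe_filter, Set.mem_ofPred_eq, mem_dominoPlacements, mem_coe] at hS ⊢
    grind
  · intro S hS
    simp only [coe_filter, Set.mem_ofPred_eq, mem_dominoPlacements, mem_coe] at hS ⊢
    grind
  · intro S hS
    simp only [coe_filter, Set.mem_ofPred_eq] at hS
    exact insert_erase hS.2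
  · intro S hS
    simp only [mem_coe, mem_dominoPlacements] at hS
    exact erase_insert fun h => by have := (hS.2 n h).1; omega

theorem card_dominoPlacements_add_two (n k : ℕ) :
    #(dominoPlacements (n + 2) (k + 1)) =
      #(dominoPlacements (n + 1) (k + 1)) + #(dominoPlacements n k) := by
  rw [← card_filter_add_card_filter_not (p := (n ∈ ·)), card_filter_mem_dominoPlacements,
    filter_notMem_dominoPlacements, add_comm]

theorem dominoPlacements_eq_empty {n k : ℕ} (hn : n ≤ 1) : dominoPlacements n (k + 1) = ∅ := by
  refine eq_empty_of_forall_notMem fun S hS => ?_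
  rw [mem_dominoPlacements] at hS
  obtain ⟨i, hi⟩ := card_pos.1 (by rw [hS.1]; exact k.succ_pos)
  have := (hS.2 i hi).1
  omega

theorem card_dominoPlacements : ∀ n k, #(dominoPlacements n k) = (n - k).choose k
  | n, 0 => by simp [dominoPlacements, filter_singleton]
  | 0, k + 1 => by simp [dominoPlacements_eq_empty]
  | 1, k + 1 => by simp [dominoPlacements_eq_empty]
  | n + 2, k + 1 => by
    rw [card_dominoPlacements_add_two, card_dominoPlacements (n + 1) (k + 1),
      card_dominoPlacements n k]
    rcases le_or_gt k n with h | h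
    · rw [show n + 2 - (k + 1) = n - k + 1 by omega, show n + 1 - (k + 1) = n - k by omega,
        Nat.choose_succ_succ', add_comm]
    · rw [show n + 2 - (k + 1) = 0 by omega, show n + 1 - (k + 1) = 0 by omega,
        show n - k = 0 by omega, Nat.choose_eq_zero_of_lt (show 0 < k by omega), add_zero]

theorem Finset.card_le_sum_of_one_le {ι : Type*} {s : Finset ι} {f : ι → ℕ}
    (h : ∀ i ∈ s, 1 ≤ f i) : #s ≤ ∑ i ∈ s, f i :=
  card_eq_sum_ones s ▸ sum_le_sum h

theorem Finset.card_eq_sum_iff_of_one_le {ι : Type*} {s : Finset ι} {f : ι → ℕ}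
    (h : ∀ i ∈ s, 1 ≤ f i) : #s = ∑ i ∈ s, f i ↔ ∀ i ∈ s, f i = 1 := by
  rw [card_eq_sum_ones, sum_eq_sum_iff_of_le h]
  exact forall₂_congr fun _ _ => eq_comm

theorem Equiv.Perm.sum_comp_tsub_eq {α : Type*} [Fintype α] (σ : Perm α) (f : α → ℕ) :
    ∑ i, (f (σ i) - f i) = ∑ i, (f i - f (σ i)) := by
  have hmax : ∀ i, f (σ i) - f i + f i = f i - f (σ i) + f (σ i) := fun i => by omega
  apply Nat.add_right_cancel (m := ∑ i, f i)
  conv_rhs => rw [← Equiv.sum_comp σ f]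
  rw [← sum_add_distrib, ← sum_add_distrib, sum_congr rfl fun i _ => hmax i]

namespace Equiv.Perm

variable {m : ℕ} (π : Perm (Fin m))

def excedances : Finset (Fin m) := univ.filter fun i => i < π i

def deficiencies : Finset (Fin m) := univ.filter fun i => π i < i

def depth : ℕ := ∑ i ∈ π.excedances, ((π i : ℕ) - i)

def MovesAtMostOne : Prop := ∀ i, (π i : ℕ) ≤ i + 1 ∧ (i : ℕ) ≤ π i + 1

instance : Decidable π.MovesAtMostOne := by
  unfold MovesAtMostOne
  infer_instance

theorem depth_eq_sum_deficiencies : π.depth = ∑ i ∈ π.deficiencies, ((i : ℕ) - π i) := by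
  rw [depth, deficiencies, excedances, sum_filter_of_ne, sum_filter_of_ne,
    sum_comp_tsub_eq π Fin.val]
  · exact fun i _ h => Fin.lt_def.2 (by omega)
  · exact fun i _ h => Fin.lt_def.2 (by omega)

theorem card_support_eq : #π.support = #π.excedances + #π.deficiencies := by
  have hdisj : _root_.Disjoint π.excedances π.deficiencies :=
    disjoint_filter.2 fun _ _ => lt_asymm
  rw [← card_union_of_disjoint hdisj]
  congr 1
  ext i
  simp only [excedances, deficiencies, mem_union, mem_filter, mem_support, mem_univ, true_and]
  exact ne_comm.trans lt_or_lt_iff_ne.symm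

theorem one_le_of_mem_excedances {i : Fin m} (hi : i ∈ π.excedances) : 1 ≤ (π i : ℕ) - i := by
  simp only [excedances, mem_filter, Fin.lt_def] at hi
  omega

theorem one_le_of_mem_deficiencies {i : Fin m} (hi : i ∈ π.deficiencies) :
    1 ≤ (i : ℕ) - π i := by
  simp only [deficiencies, mem_filter, Fin.lt_def] at hi
  omega

theorem card_excedances_eq_depth_iff :
    #π.excedances = π.depth ↔ ∀ i ∈ π.excedances, (π i : ℕ) = i + 1 := by
  rw [depth, card_eq_sum_iff_of_one_le fun _ => π.one_le_of_mem_excedances]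
  exact forall₂_congr fun i hi => by have := π.one_le_of_mem_excedances hi; omega

theorem card_deficiencies_eq_depth_iff :
    #π.deficiencies = π.depth ↔ ∀ i ∈ π.deficiencies, (π i : ℕ) + 1 = i := by
  rw [depth_eq_sum_deficiencies, card_eq_sum_iff_of_one_le fun _ => π.one_le_of_mem_deficiencies]
  exact forall₂_congr fun i hi => by have := π.one_le_of_mem_deficiencies hi; omega

theorem card_support_eq_two_mul_depth_iff : #π.support = 2 * π.depth ↔ π.MovesAtMostOne := by
  have hE : #π.excedances ≤ π.depth :=
    card_le_sum_of_one_le fun _ => π.one_le_of_mem_excedances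
  have hD : #π.deficiencies ≤ π.depth :=
    π.depth_eq_sum_deficiencies ▸ card_le_sum_of_one_le fun _ => π.one_le_of_mem_deficiencies
  rw [card_support_eq, show #π.excedances + #π.deficiencies = 2 * π.depth ↔
      #π.excedances = π.depth ∧ #π.deficiencies = π.depth by omega,
    card_excedances_eq_depth_iff, card_deficiencies_eq_depth_iff]
  simp only [excedances, deficiencies, mem_filter, mem_univ, true_and, Fin.lt_def]
  constructor
  · rintro ⟨hE, hD⟩ i
    rcases lt_trichotomy (i : ℕ) (π i) with h | h | h
    · have := hE i h; omega
    · omega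
    · have := hD i h; omega
  · intro h
    exact ⟨fun i _ => by have := h i; omega, fun i _ => by have := h i; omega⟩

namespace MovesAtMostOne

variable {π}

theorem inv (h : π.MovesAtMostOne) : π⁻¹.MovesAtMostOne := fun i => by
  have := h (π⁻¹ i)
  simp only [coe_inv, Equiv.apply_symm_apply] at this ⊢
  omega

theorem apply_apply_of_apply_eq_succ (h : π.MovesAtMostOne) {i : Fin m}
    (hi : (π i : ℕ) = i + 1) : π (π i) = i := by
  induction i using Fin.strong_induction_on with
  | _ i ih =>
  obtain ⟨j, hj⟩ := π.surjective i
  have hji := h j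
  rw [hj] at hji
  have hne : j ≠ i := by rintro rfl; omega
  rcases (by omega : (j : ℕ) = i + 1 ∨ (j : ℕ) + 1 = i) with hup | hdown
  · rw [show π i = j from Fin.ext (by omega), hj]
  · have := congrArg Fin.val (ih j (Fin.lt_def.2 (by omega)) (by omega))
    rw [hj] at this
    omega

theorem involutive (h : π.MovesAtMostOne) : Function.Involutive π := by
  intro i
  rcases lt_trichotomy (i : ℕ) (π i) with hlt | heq | hgt
  · exact h.apply_apply_of_apply_eq_succ (by have := h i; omega)
  · rw [← Fin.ext heq, ← Fin.ext heq]
  · have hinv : π⁻¹ i = π i := by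
      simpa using h.inv.apply_apply_of_apply_eq_succ (i := π i)
        (by have := h i; simp only [coe_inv, symm_apply_apply]; omega)
    rw [← hinv]
    exact π.apply_symm_apply i

theorem mem_excedances_iff (h : π.MovesAtMostOne) {i : Fin m} :
    i ∈ π.excedances ↔ (π i : ℕ) = i + 1 := by
  simp only [excedances, mem_filter, mem_univ, true_and, Fin.lt_def]
  have := h i
  omega

theorem card_excedances_eq_depth (h : π.MovesAtMostOne) : #π.excedances = π.depth :=
  π.card_excedances_eq_depth_iff.2 fun _ hi => h.mem_excedances_iff.1 hi

theorem map_excedances_mem_dominoPlacements (h : π.MovesAtMostOne) :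
    π.excedances.map Fin.valEmbedding ∈ dominoPlacements m #π.excedances := by
  simp only [mem_dominoPlacements, card_map, true_and, mem_map, Fin.valEmbedding_apply,
    forall_exists_index, and_imp, h.mem_excedances_iff]
  rintro _ i hi rfl
  refine ⟨by omega, fun ⟨j, hj, hji⟩ => ?_⟩
  have := congrArg Fin.val (h.involutive i)
  rw [show π i = j from Fin.ext (by omega)] at this
  omega

end MovesAtMostOne

def dominoSwap (S : Finset ℕ) (i : Fin m) : Fin m :=
  if h : (i : ℕ) ∈ S ∧ (i : ℕ) + 1 < m then ⟨i + 1, h.2⟩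
  else if h' : (i : ℕ) - 1 ∈ S ∧ 0 < (i : ℕ) then ⟨i - 1, by omega⟩ else i

theorem val_dominoSwap (S : Finset ℕ) (i : Fin m) :
    (dominoSwap S i : ℕ) =
      if (i : ℕ) ∈ S ∧ (i : ℕ) + 1 < m then (i : ℕ) + 1
      else if (i : ℕ) - 1 ∈ S ∧ 0 < (i : ℕ) then (i : ℕ) - 1 else (i : ℕ) := by
  unfold dominoSwap
  split_ifs <;> rfl

theorem involutive_dominoSwap {S : Finset ℕ} (hS : ∀ i ∈ S, i + 1 ∉ S) :
    Function.Involutive (dominoSwap (m := m) S) := by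
  intro i
  ext
  simp only [val_dominoSwap]
  split_ifs <;> grind

theorem lt_dominoSwap_iff {S : Finset ℕ} (hS : ∀ i ∈ S, i + 1 < m) {i : Fin m} :
    i < dominoSwap S i ↔ (i : ℕ) ∈ S := by
  rw [Fin.lt_def, val_dominoSwap]
  split_ifs <;> grind

def ofDominoes (m : ℕ) (S : Finset ℕ) (hS : ∀ i ∈ S, i + 1 ∉ S) : Perm (Fin m) :=
  (involutive_dominoSwap hS).toPerm _

theorem ofDominoes_apply {S : Finset ℕ} (hS : ∀ i ∈ S, i + 1 ∉ S) (i : Fin m) :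
    ofDominoes m S hS i = dominoSwap S i := rfl

theorem movesAtMostOne_ofDominoes {S : Finset ℕ} (hS : ∀ i ∈ S, i + 1 ∉ S) :
    (ofDominoes m S hS).MovesAtMostOne := fun i => by
  simp only [ofDominoes_apply, val_dominoSwap]
  split_ifs <;> omega

theorem map_excedances_ofDominoes {S : Finset ℕ} (hS : ∀ i ∈ S, i + 1 < m ∧ i + 1 ∉ S) :
    (ofDominoes m S fun i hi => (hS i hi).2).excedances.map Fin.valEmbedding = S := by
  ext n
  simp only [mem_map, excedances, mem_filter, mem_univ, true_and, ofDominoes_apply,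
    lt_dominoSwap_iff fun i hi => (hS i hi).1, Fin.valEmbedding_apply]
  constructor
  · rintro ⟨i, hi, rfl⟩
    exact hi
  · intro hn
    exact ⟨⟨n, by have := (hS n hn).1; omega⟩, hn, rfl⟩

namespace MovesAtMostOne

variable {π}

theorem ofDominoes_map_excedances (h : π.MovesAtMostOne)
    (hS : ∀ n ∈ π.excedances.map Fin.valEmbedding, n + 1 ∉ π.excedances.map Fin.valEmbedding) :
    ofDominoes m _ hS = π := by
  have hmem : ∀ n, n ∈ π.excedances.map Fin.valEmbedding ↔
      ∃ j : Fin m, (j : ℕ) = n ∧ (π j : ℕ) = n + 1 := fun n => by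
    simp only [mem_map, Fin.valEmbedding_apply, h.mem_excedances_iff]
    grind
  ext i
  rw [ofDominoes_apply, val_dominoSwap]
  simp only [hmem]
  have hi := h i
  split_ifs with hup hdown
  · obtain ⟨⟨j, hj, hπj⟩, -⟩ := hup
    rw [← Fin.ext hj]
    omega
  · obtain ⟨⟨j, hj, hπj⟩, hpos⟩ := hdown
    have := congrArg Fin.val (h.involutive j)
    rw [show π j = i from Fin.ext (by omega)] at this
    omega
  · rcases (by omega : (π i : ℕ) = i + 1 ∨ (π i : ℕ) + 1 = i ∨ (π i : ℕ) = i) with h1 | h2 | h3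
    · exact absurd ⟨⟨i, rfl, h1⟩, by omega⟩ hup
    · have := h.involutive i
      exact absurd ⟨⟨π i, by omega, by rw [this]; omega⟩, by omega⟩ hdown
    · exact h3.symm

end MovesAtMostOne

theorem card_filter_movesAtMostOne (m k : ℕ) :
    #(univ.filter fun π : Perm (Fin m) => π.MovesAtMostOne ∧ #π.excedances = k) =
      #(dominoPlacements m k) := by
  refine card_bij' (fun π _ => π.excedances.map Fin.valEmbedding)
    (fun S hS => ofDominoes m S fun i hi => ((mem_dominoPlacements.1 hS).2 i hi).2) ?_ ?_ ?_ ?_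
  · intro π hπ
    obtain ⟨h, hk⟩ := (mem_filter.1 hπ).2
    exact hk ▸ h.map_excedances_mem_dominoPlacements
  · intro S hS
    obtain ⟨hk, hS⟩ := mem_dominoPlacements.1 hS
    refine mem_filter.2 ⟨mem_univ _, movesAtMostOne_ofDominoes _, ?_⟩
    rw [← card_map Fin.valEmbedding, map_excedances_ofDominoes hS, hk]
  · intro π hπ
    exact (mem_filter.1 hπ).2.1.ofDominoes_map_excedances _
  · intro S hS
    exact map_excedances_ofDominoes (mem_dominoPlacements.1 hS).2

theorem card_fixed_eq_and_depth_eq_iff {ℓ k : ℕ} (hm : m = ℓ + 2 * k) :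
    #(univ.filter fun i => π i = i) = ℓ ∧ π.depth = k ↔
      π.MovesAtMostOne ∧ #π.excedances = k := by
  have hsupp : #(univ.filter fun i => π i = i) + #π.support = m :=
    (card_filter_add_card_filter_not (s := univ) fun i => π i = i).trans (card_fin m)
  constructor
  · rintro ⟨hfix, hdepth⟩
    have h := π.card_support_eq_two_mul_depth_iff.1 (by omega)
    exact ⟨h, h.card_excedances_eq_depth.trans hdepth⟩
  · rintro ⟨h, hk⟩
    have := π.card_support_eq_two_mul_depth_iff.2 h
    have := h.card_excedances_eq_depth
    omega

theorem card_filter_card_fixed_eq_and_depth_eq {ℓ k : ℕ} (hm : m = ℓ + 2 * k) :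
    #(univ.filter fun π : Perm (Fin m) => #(univ.filter fun i => π i = i) = ℓ ∧ π.depth = k) =
      (ℓ + k).choose ℓ := by
  rw [filter_congr fun π _ => π.card_fixed_eq_and_depth_eq_iff hm, card_filter_movesAtMostOne,
    card_dominoPlacements, show m - k = ℓ + k by omega, Nat.choose_symm_add]

end Equiv.Perm

theorem count_minimal_perms_even_general (m ℓ : ℕ) (hl : ℓ ≤ m)
    (hpar : Even (m - ℓ)) :
    Nat.card {π : Equiv.Perm (Fin m) //
        (Finset.univ.filter fun i : Fin m => π i = i).card = ℓ ∧
        ∑ i ∈ Finset.univ.filter (fun i : Fin m => i < π i), ((π i : ℕ) - (i : ℕ)) =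
          (m - ℓ) / 2} =
      ((m + ℓ) / 2).choose ℓ := by
  obtain ⟨k, hk⟩ := hpar
  rw [Nat.card_eq_fintype_card, Fintype.card_subtype, show (m - ℓ) / 2 = k by omega,
    show (m + ℓ) / 2 = ℓ + k by omega]
  exact Equiv.Perm.card_filter_card_fixed_eq_and_depth_eq (by omega)

/-- For `m ≥ 2` and `ℓ ≤ m` with `m - ℓ` even, the number of permutations `π ∈ S_m` with
exactly `ℓ` fixed points and `c(π) = (m - ℓ)/2`, where `c(π) = ∑_{i : π(i) > i} (π(i) - i)`,
equals `C((m+ℓ)/2, ℓ)`. -/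
theorem count_minimal_perms_even (m ℓ : ℕ) (hm : 2 ≤ m) (hl : ℓ ≤ m)
    (hpar : Even (m - ℓ)) :
    Nat.card {π : Equiv.Perm (Fin m) //
        (Finset.univ.filter fun i : Fin m => π i = i).card = ℓ ∧
        ∑ i ∈ Finset.univ.filter (fun i : Fin m => i < π i), ((π i : ℕ) - (i : ℕ)) =
          (m - ℓ) / 2} =
      ((m + ℓ) / 2).choose ℓ :=
  count_minimal_perms_even_general m ℓ hl hpar
end

section
/- Let $m \geq 2$ and $\ell \leq m$ with $m - \ell$ odd. The number of permutations $\pi \in S_m$ with exactly $\ell$ fixed points achieving the minimal value $c(\pi) = (m-\ell+1)/2$ of $c(\pi) = \sum_{i:\pi(i)>i}(\pi(i)-i)$ equals $(m-\ell-1)\binom{(m+\ell-1)/2}{\ell}$. -/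
namespace CountMin

open Finset

def Dom (m k : ℕ) : Finset (Finset ℕ) :=
  ((Finset.range m).powerset).filter fun T =>
    T.card = k ∧ (∀ i ∈ T, i + 2 ≤ m) ∧ ∀ i ∈ T, ∀ j ∈ T, i < j → i + 2 ≤ j

lemma mem_Dom {m k : ℕ} {T : Finset ℕ} :
    T ∈ Dom m k ↔ T.card = k ∧ (∀ i ∈ T, i + 2 ≤ m) ∧
      ∀ i ∈ T, ∀ j ∈ T, i < j → i + 2 ≤ j := by
  constructor
  · intro h
    exact (Finset.mem_filter.1 h).2
  · intro h
    refine Finset.mem_filter.2 ⟨Finset.mem_powerset.2 fun i hi => ?_, h⟩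
    exact Finset.mem_range.2 (by have := h.2.1 i hi; omega)

lemma Dom_zero (m : ℕ) : Dom m 0 = {∅} := by
  ext T
  simp only [mem_Dom, Finset.mem_singleton, Finset.card_eq_zero]
  constructor
  · tauto
  · rintro rfl
    simp

lemma Dom_split (m k : ℕ) :
    (Dom (m + 2) (k + 1)).card = (Dom (m + 1) (k + 1)).card + (Dom m k).card := by
  classical
  rw [← Finset.card_filter_add_card_filter_not
    (s := Dom (m + 2) (k + 1)) (p := fun T => m ∈ T), add_comm]
  congr 1
  · -- dominoes avoiding the end
    congr 1
    ext T
    simp only [Finset.mem_filter, mem_Dom]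
    constructor
    · rintro ⟨⟨hcard, hle, hgap⟩, hm⟩
      refine ⟨hcard, ?_, hgap⟩
      intro i hi
      have h1 := hle i hi
      have h2 : i ≠ m := fun h => hm (h ▸ hi)
      omega
    · rintro ⟨hcard, hle, hgap⟩
      refine ⟨⟨hcard, fun i hi => by have := hle i hi; omega, hgap⟩, fun hm => ?_⟩
      have := hle m hm; omega
  · -- dominoes containing the last domino ↦ erase
    apply Finset.card_nbij' (i := fun T => T.erase m) (j := fun T => insert m T)
    · intro T hT
      simp only [Finset.mem_coe, Finset.mem_filter] at hT
      obtain ⟨hT, hm⟩ := hT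
      rw [mem_Dom] at hT; rw [Finset.mem_coe, mem_Dom]
      obtain ⟨hcard, hle, hgap⟩ := hT
      refine ⟨by rw [Finset.card_erase_of_mem hm, hcard]; omega, ?_, ?_⟩
      · intro i hi
        rw [Finset.mem_erase] at hi
        rcases lt_trichotomy i m with h | h | h
        · exact hgap i hi.2 m hm h
        · omega
        · have := hle i hi.2; omega
      · intro i hi j hj hij
        exact hgap i (Finset.mem_erase.1 hi).2 j (Finset.mem_erase.1 hj).2 hij
    · intro T hT
      rw [Finset.mem_coe, mem_Dom] at hT
      obtain ⟨hcard, hle, hgap⟩ := hT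
      have hmT : m ∉ T := fun h => by have := hle m h; omega
      refine Finset.mem_filter.2 ⟨mem_Dom.2 ⟨?_, ?_, ?_⟩, Finset.mem_insert_self m T⟩
      · rw [Finset.card_insert_of_notMem hmT, hcard]
      · intro i hi
        rcases Finset.mem_insert.1 hi with rfl | h
        · omega
        · have := hle i h; omega
      · intro i hi j hj hij
        rcases Finset.mem_insert.1 hi with rfl | hi' <;>
          rcases Finset.mem_insert.1 hj with rfl | hj'
        · omega
        · have := hle j hj'; omega
        · have := hle i hi'; omega
        · exact hgap i hi' j hj' hij
    · intro T hT
      simp only [Finset.mem_coe, Finset.mem_filter] at hT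
      exact Finset.insert_erase hT.2
    · intro T hT
      rw [Finset.mem_coe, mem_Dom] at hT
      have hmT : m ∉ T := fun h => by have := hT.2.1 m h; omega
      exact Finset.erase_insert hmT

lemma card_Dom (m k : ℕ) : (Dom m k).card = (m - k).choose k := by
  induction m using Nat.strong_induction_on generalizing k with
  | _ m ih =>
    match m, k with
    | m, 0 => simp [Dom_zero]
    | 0, (k+1) =>
      have : Dom 0 (k + 1) = ∅ := by
        ext T
        simp only [mem_Dom, Finset.notMem_empty, iff_false]
        rintro ⟨hcard, hle, -⟩
        have : T = ∅ := by
          ext i; simp only [Finset.notMem_empty, iff_false]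
          intro hi; have := hle i hi; omega
        simp [this] at hcard
      rw [this]
      simp [Nat.choose_eq_zero_of_lt]
    | 1, (k+1) =>
      have : Dom 1 (k + 1) = ∅ := by
        ext T
        simp only [mem_Dom, Finset.notMem_empty, iff_false]
        rintro ⟨hcard, hle, -⟩
        have : T = ∅ := by
          ext i; simp only [Finset.notMem_empty, iff_false]
          intro hi; have := hle i hi; omega
        simp [this] at hcard
      rw [this]
      have : (1 - (k+1)) = 0 := by omega
      simp [this, Nat.choose_eq_zero_of_lt]
    | (m+2), (k+1) =>
      rw [Dom_split, ih (m+1) (by omega), ih m (by omega)]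
      by_cases hkm : k ≤ m
      · have h1 : m + 2 - (k + 1) = (m - k) + 1 := by omega
        have h2 : m + 1 - (k + 1) = m - k := by omega
        rw [h1, h2, Nat.choose_succ_succ (m - k) k, Nat.add_comm]
      · have hk1 : 0 < k := by omega
        rw [Nat.choose_eq_zero_of_lt (by omega), Nat.choose_eq_zero_of_lt (by omega),
          Nat.choose_eq_zero_of_lt (by omega)]

def Tc (m k : ℕ) : Finset (ℕ × Finset ℕ) :=
  ((Finset.range m) ×ˢ (Finset.range m).powerset).filter fun p =>
    p.2.card = k ∧ p.1 + 3 ≤ m ∧ (∀ i ∈ p.2, i + 2 ≤ m) ∧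
    (∀ i ∈ p.2, ∀ j ∈ p.2, i < j → i + 2 ≤ j) ∧
    ∀ i ∈ p.2, i + 2 ≤ p.1 ∨ p.1 + 3 ≤ i

lemma mem_Tc {m k : ℕ} {p : ℕ × Finset ℕ} :
    p ∈ Tc m k ↔ p.2.card = k ∧ p.1 + 3 ≤ m ∧ (∀ i ∈ p.2, i + 2 ≤ m) ∧
      (∀ i ∈ p.2, ∀ j ∈ p.2, i < j → i + 2 ≤ j) ∧
      ∀ i ∈ p.2, i + 2 ≤ p.1 ∨ p.1 + 3 ≤ i := by
  constructor
  · intro h; exact (Finset.mem_filter.1 h).2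
  · intro h
    refine Finset.mem_filter.2 ⟨Finset.mem_product.2 ⟨Finset.mem_range.2 (by omega),
      Finset.mem_powerset.2 fun i hi => Finset.mem_range.2
        (by have := h.2.2.1 i hi; omega)⟩, h⟩

lemma Tc_split (m k : ℕ) :
    (Tc (m + 3) k).card = (Tc (m + 2) k).card
      + ((Tc (m + 3) k).filter (fun p => m + 1 ∈ p.2)).card + (Dom m k).card := by
  classical
  rw [← Finset.card_filter_add_card_filter_not
    (s := Tc (m + 3) k) (p := fun p => m + 1 ∈ p.2), add_comm,
    ← Finset.card_filter_add_card_filter_not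
    (s := (Tc (m + 3) k).filter (fun p => ¬ m + 1 ∈ p.2)) (p := fun p => p.1 = m),
    add_comm (Finset.card _), add_assoc, add_comm (Finset.card _) (Finset.card _),
    ← add_assoc]
  congr 1
  congr 1
  · -- neither at the end : equals Tc (m+2) k
    congr 1
    ext p
    simp only [Finset.mem_filter, mem_Tc]
    constructor
    · rintro ⟨⟨⟨hcard, hb, hle, hgap, hsep⟩, hm1⟩, hbm⟩
      refine ⟨hcard, by omega, fun i hi => ?_, hgap, hsep⟩
      have h1 := hle i hi
      have h2 : i ≠ m + 1 := fun h => hm1 (h ▸ hi)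
      omega
    · rintro ⟨hcard, hb, hle, hgap, hsep⟩
      refine ⟨⟨⟨hcard, by omega, fun i hi => by have := hle i hi; omega, hgap, hsep⟩,
        fun hm1 => by have := hle _ hm1; omega⟩, fun h => by omega⟩
  · -- tromino at the end : equals Dom m k
    apply Finset.card_nbij' (i := fun p => p.2) (j := fun T => (m, T))
    · rintro ⟨b, T⟩ hp
      simp only [Finset.mem_coe, Finset.mem_filter, mem_Tc] at hp
      obtain ⟨⟨⟨hcard, hb, hle, hgap, hsep⟩, hm1⟩, hbm⟩ := hp
      have hbm' : b = m := hbm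
      refine mem_Dom.2 ⟨hcard, fun i hi => ?_, hgap⟩
      rcases hsep i hi with h | h
      · omega
      · have h2 := hle i hi
        have : i ≠ m + 1 := fun hh => hm1 (hh ▸ hi)
        omega
    · intro T hT
      rw [Finset.mem_coe, mem_Dom] at hT
      obtain ⟨hcard, hle, hgap⟩ := hT
      refine Finset.mem_filter.2 ⟨Finset.mem_filter.2 ⟨mem_Tc.2 ⟨hcard, by dsimp only; omega,
        fun i hi => by have := hle i hi; omega, hgap,
        fun i hi => Or.inl (hle i hi)⟩, fun h => by have := hle _ h; omega⟩, rfl⟩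
    · rintro ⟨b, T⟩ hp
      simp only [Finset.mem_coe, Finset.mem_filter] at hp
      have : b = m := hp.2
      simp [this]
    · intro T hT; rfl

lemma Tc_split_zero (m : ℕ) :
    ((Tc (m + 3) 0).filter (fun p => m + 1 ∈ p.2)) = ∅ := by
  ext p
  simp only [Finset.mem_filter, mem_Tc, Finset.notMem_empty, iff_false]
  rintro ⟨⟨hcard, -⟩, hm⟩
  rw [Finset.card_eq_zero] at hcard
  rw [hcard] at hm
  exact Finset.notMem_empty _ hm

lemma Tc_split_succ (m k : ℕ) :
    ((Tc (m + 3) (k + 1)).filter (fun p => m + 1 ∈ p.2)).card = (Tc (m + 1) k).card := by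
  classical
  apply Finset.card_nbij' (i := fun p => (p.1, p.2.erase (m+1)))
    (j := fun p => (p.1, insert (m+1) p.2))
  · rintro ⟨b, T⟩ hp
    simp only [Finset.mem_coe, Finset.mem_filter, mem_Tc] at hp
    obtain ⟨⟨hcard, hb, hle, hgap, hsep⟩, hm1⟩ := hp
    simp only at hm1 hcard hle hgap hsep ⊢
    have hbm : b + 3 ≤ m + 1 := by
      rcases hsep _ hm1 with h | h <;> omega
    refine mem_Tc.2 ⟨by rw [Finset.card_erase_of_mem hm1, hcard]; omega, hbm, ?_, ?_, ?_⟩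
    · intro i hi
      rw [Finset.mem_erase] at hi
      rcases lt_trichotomy i (m+1) with h | h | h
      · have := hgap i hi.2 (m+1) hm1 h; omega
      · omega
      · have := hle i hi.2; omega
    · intro i hi j hj hij
      exact hgap i (Finset.mem_erase.1 hi).2 j (Finset.mem_erase.1 hj).2 hij
    · intro i hi
      exact hsep i (Finset.mem_erase.1 hi).2
  · rintro ⟨b, T⟩ hp
    rw [Finset.mem_coe, mem_Tc] at hp
    obtain ⟨hcard, hb, hle, hgap, hsep⟩ := hp
    simp only at hcard hle hgap hsep ⊢
    have hmT : m + 1 ∉ T := fun h => by have := hle _ h; omega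
    refine Finset.mem_filter.2 ⟨mem_Tc.2 ⟨?_, by omega, ?_, ?_, ?_⟩, ?_⟩
    · rw [Finset.card_insert_of_notMem hmT, hcard]
    · intro i hi
      rcases Finset.mem_insert.1 hi with rfl | h
      · omega
      · have := hle i h; omega
    · intro i hi j hj hij
      rcases Finset.mem_insert.1 hi with rfl | hi' <;>
        rcases Finset.mem_insert.1 hj with rfl | hj'
      · omega
      · have := hle j hj'; omega
      · have := hle i hi'; omega
      · exact hgap i hi' j hj' hij
    · intro i hi
      rcases Finset.mem_insert.1 hi with rfl | h
      · right; omega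
      · rcases hsep i h with hh | hh
        · left; exact hh
        · right; omega
    · exact Finset.mem_insert_self _ _
  · rintro ⟨b, T⟩ hp
    simp only [Finset.mem_coe, Finset.mem_filter] at hp
    simp [Finset.insert_erase hp.2]
  · rintro ⟨b, T⟩ hp
    rw [Finset.mem_coe, mem_Tc] at hp
    have hmT : m + 1 ∉ T := fun h => by have := hp.2.2.1 _ h; omega
    simp [Finset.erase_insert hmT]


lemma Tc_empty {m k : ℕ} (hm : m ≤ 2) : Tc m k = ∅ := by
  ext p
  simp only [mem_Tc, Finset.notMem_empty, iff_false]
  rintro ⟨-, hb, -⟩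
  omega

lemma card_Tc (m k : ℕ) (hD : ∀ m' k', (Dom m' k').card = (m' - k').choose k') :
    (Tc m k).card = (k + 1) * ((m - k - 2).choose (k + 1)) := by
  induction m using Nat.strong_induction_on generalizing k with
  | _ m ih =>
    match m, k with
    | 0, k => rw [Tc_empty (by omega)]; simp [Nat.choose_eq_zero_of_lt]
    | 1, k =>
      rw [Tc_empty (by omega)]
      have : 1 - k - 2 = 0 := by omega
      simp [this, Nat.choose_eq_zero_of_lt]
    | 2, k =>
      rw [Tc_empty (by omega)]
      have : 2 - k - 2 = 0 := by omega
      simp [this, Nat.choose_eq_zero_of_lt]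
    | (m+3), 0 =>
      rw [Tc_split, Tc_split_zero, Finset.card_empty, ih (m+2) (by omega), hD]
      have h1 : m + 2 - 0 - 2 = m := by omega
      have h3 : m + 3 - 0 - 2 = m + 1 := by omega
      rw [h1, h3]
      simp [Nat.choose_one_right]
    | (m+3), (k+1) =>
      rw [Tc_split, Tc_split_succ, ih (m+2) (by omega), ih (m+1) (by omega), hD]
      have h1 : m + 2 - (k+1) - 2 = m - k - 1 := by omega
      have h2 : m + 1 - k - 2 = m - k - 1 := by omega
      have h3 : m - (k+1) = m - k - 1 := by omega
      have h4 : m + 3 - (k+1) - 2 = m - k := by omega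
      rw [h1, h2, h3, h4]
      by_cases hmk : k + 1 ≤ m
      · have h5 : m - k = (m - k - 1) + 1 := by omega
        conv_rhs => rw [h5, Nat.choose_succ_succ (m - k - 1) (k+1)]
        ring
      · have h6 : m - k - 1 = 0 := by omega
        have h7 : m - k = 0 := by omega
        rw [h6, h7, Nat.choose_eq_zero_of_lt (by omega), Nat.choose_eq_zero_of_lt (by omega)]
        simp

/-- Validity of a configuration: tromino at `[b, b+3)`, dominoes at `[i, i+2)` for `i ∈ T`,
all inside `[0, m)` and pairwise disjoint. -/
def Valid (m b : ℕ) (T : Finset ℕ) : Prop :=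
  b + 3 ≤ m ∧ (∀ i ∈ T, i + 2 ≤ m) ∧ (∀ i ∈ T, ∀ j ∈ T, i < j → i + 2 ≤ j) ∧
    (∀ i ∈ T, i + 2 ≤ b ∨ b + 3 ≤ i)

lemma Valid.not_succ_mem {m b : ℕ} {T : Finset ℕ} (h : Valid m b T) :
    ∀ i ∈ T, i + 1 ∉ T := by
  intro i hi hi1
  have := h.2.2.1 i hi (i+1) hi1 (by omega)
  omega

lemma Valid.sep {m b : ℕ} {T : Finset ℕ} (h : Valid m b T) :
    ∀ i ∈ T, i ≠ b ∧ i ≠ b + 1 ∧ i ≠ b + 2 ∧ i + 1 ≠ b ∧ i + 1 ≠ b + 1 ∧ i + 1 ≠ b + 2 := by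
  intro i hi
  have := h.2.2.2 i hi
  omega

/-- The permutation (as a function on `ℕ`) given by a configuration.
`o = true` is the 3-cycle `b ↦ b+1 ↦ b+2 ↦ b`; `o = false` its inverse. -/
def gfun (o : Bool) (b : ℕ) (T : Finset ℕ) (i : ℕ) : ℕ :=
  if i = b then (bif o then b+1 else b+2)
  else if i = b + 1 then (bif o then b+2 else b)
  else if i = b + 2 then (bif o then b else b+1)
  else if i ∈ T then i + 1
  else if 1 ≤ i ∧ i - 1 ∈ T then i - 1
  else i

variable {m b : ℕ} {T : Finset ℕ} {o : Bool}

lemma gfun_b : gfun o b T b = (bif o then b+1 else b+2) := by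
  simp [gfun]

lemma gfun_b1 : gfun o b T (b+1) = (bif o then b+2 else b) := by
  unfold gfun
  rw [if_neg (by omega), if_pos rfl]

lemma gfun_b2 : gfun o b T (b+2) = (bif o then b else b+1) := by
  unfold gfun
  rw [if_neg (by omega), if_neg (by omega), if_pos rfl]

lemma gfun_T (h : Valid m b T) {i : ℕ} (hi : i ∈ T) : gfun o b T i = i + 1 := by
  obtain ⟨h1, h2, h3, -⟩ := h.sep i hi
  unfold gfun
  rw [if_neg h1, if_neg h2, if_neg h3, if_pos hi]

lemma gfun_T1 (h : Valid m b T) {i : ℕ} (hi : i ∈ T) : gfun o b T (i + 1) = i := by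
  obtain ⟨-, -, -, h4, h5, h6⟩ := h.sep i hi
  unfold gfun
  rw [if_neg h4, if_neg h5, if_neg h6, if_neg (h.not_succ_mem i hi),
    if_pos ⟨by omega, by simpa using hi⟩]
  omega

lemma gfun_id (h : Valid m b T) {i : ℕ} (hb : i ≠ b ∧ i ≠ b + 1 ∧ i ≠ b + 2)
    (hT : i ∉ T) (hT1 : ¬(1 ≤ i ∧ i - 1 ∈ T)) : gfun o b T i = i := by
  unfold gfun
  rw [if_neg hb.1, if_neg hb.2.1, if_neg hb.2.2, if_neg hT, if_neg hT1]

/-- Case analysis into the six mutually exclusive position classes. -/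
lemma pos_cases (h : Valid m b T) (i : ℕ) :
    i = b ∨ i = b + 1 ∨ i = b + 2 ∨ i ∈ T ∨ (1 ≤ i ∧ i - 1 ∈ T) ∨
      ((i ≠ b ∧ i ≠ b + 1 ∧ i ≠ b + 2) ∧ i ∉ T ∧ ¬(1 ≤ i ∧ i - 1 ∈ T)) := by
  by_cases h1 : i = b; · tauto
  by_cases h2 : i = b + 1; · tauto
  by_cases h3 : i = b + 2; · tauto
  by_cases h4 : i ∈ T; · tauto
  by_cases h5 : 1 ≤ i ∧ i - 1 ∈ T; · tauto
  tauto

lemma gfun_inv (h : Valid m b T) (o : Bool) (i : ℕ) :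
    gfun (!o) b T (gfun o b T i) = i := by
  rcases pos_cases h i with rfl | rfl | rfl | hi | hi | hi
  · cases o <;> simp [gfun_b, gfun_b1, gfun_b2]
  · cases o <;> simp [gfun_b, gfun_b1, gfun_b2]
  · cases o <;> simp [gfun_b, gfun_b1, gfun_b2]
  · rw [gfun_T h hi, gfun_T1 h hi]
  · obtain ⟨h1, h2⟩ := hi
    have hi' : (i - 1) + 1 = i := by omega
    rw [← hi', gfun_T1 h h2, gfun_T h h2]
  · rw [gfun_id h hi.1 hi.2.1 hi.2.2, gfun_id h hi.1 hi.2.1 hi.2.2]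

lemma gfun_lt (h : Valid m b T) {i : ℕ} (hi : i < m) : gfun o b T i < m := by
  rcases pos_cases h i with rfl | rfl | rfl | hi' | hi' | hi'
  · rw [gfun_b]; have := h.1; cases o <;> simp <;> omega
  · rw [gfun_b1]; have := h.1; cases o <;> simp <;> omega
  · rw [gfun_b2]; have := h.1; cases o <;> simp <;> omega
  · rw [gfun_T h hi']; have := h.2.1 i hi'; omega
  · obtain ⟨h1, h2⟩ := hi'
    have hi' : (i - 1) + 1 = i := by omega
    rw [← hi', gfun_T1 h h2]; omega
  · rw [gfun_id h hi'.1 hi'.2.1 hi'.2.2]; omega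

/-- The permutation of `Fin m` associated to a valid configuration. -/
def encPerm (h : Valid m b T) (o : Bool) : Equiv.Perm (Fin m) where
  toFun i := ⟨gfun o b T i, gfun_lt h i.2⟩
  invFun i := ⟨gfun (!o) b T i, gfun_lt h i.2⟩
  left_inv i := Fin.ext (gfun_inv h o i)
  right_inv i := Fin.ext (by simpa using gfun_inv h (!o) i)

@[simp] lemma encPerm_apply (h : Valid m b T) (o : Bool) (i : Fin m) :
    (encPerm h o i : ℕ) = gfun o b T i := rfl


variable {m b : ℕ} {T : Finset ℕ} {o : Bool}

/-- The set of non-fixed points of the configuration permutation. -/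
def NF (b : ℕ) (T : Finset ℕ) : Finset ℕ :=
  insert b (insert (b+1) (insert (b+2) (T ∪ T.image (· + 1))))

lemma mem_image_succ {T : Finset ℕ} {i : ℕ} :
    i ∈ T.image (· + 1) ↔ 1 ≤ i ∧ i - 1 ∈ T := by
  simp only [Finset.mem_image]
  constructor
  · rintro ⟨j, hj, rfl⟩
    exact ⟨by omega, by simpa using hj⟩
  · rintro ⟨h1, h2⟩
    exact ⟨i - 1, h2, by omega⟩

lemma gfun_ne_self_iff (h : Valid m b T) (i : ℕ) :
    gfun o b T i ≠ i ↔ i ∈ NF b T := by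
  rcases pos_cases h i with rfl | rfl | rfl | hi | hi | hi
  · simp only [NF, mem_insert]
    rw [gfun_b]
    cases o <;> simp <;> omega
  · simp only [NF, mem_insert]
    rw [gfun_b1]
    cases o <;> simp <;> omega
  · simp only [NF, mem_insert]
    rw [gfun_b2]
    cases o <;> simp <;> omega
  · rw [gfun_T h hi]
    simp only [NF, mem_insert, mem_union]
    constructor
    · intro; tauto
    · intro; omega
  · have hi' : (i - 1) + 1 = i := by omega
    rw [← hi', gfun_T1 h hi.2]
    simp only [NF, mem_insert, mem_union]
    constructor
    · intro
      right; right; right; right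
      rw [mem_image_succ, hi']
      exact hi
    · intro; omega
  · rw [gfun_id h hi.1 hi.2.1 hi.2.2]
    simp only [NF, mem_insert, mem_union, ne_eq, not_true_eq_false, false_iff]
    push_neg
    refine ⟨hi.1.1, hi.1.2.1, hi.1.2.2, hi.2.1, ?_⟩
    rw [mem_image_succ]
    exact hi.2.2

lemma card_NF (h : Valid m b T) : (NF b T).card = 2 * T.card + 3 := by
  have hsep := h.sep
  have himT : ∀ x, x ∈ T.image (· + 1) → (1 ≤ x ∧ x - 1 ∈ T) := fun x hx =>
    mem_image_succ.1 hx
  have hd : Disjoint T (T.image (· + 1)) := by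
    rw [Finset.disjoint_left]
    intro a ha ha'
    obtain ⟨h1, h2⟩ := mem_image_succ.1 ha'
    have h3 := h.not_succ_mem (a-1) h2
    have h4 : (a - 1) + 1 = a := by omega
    rw [h4] at h3
    exact h3 ha
  have h1 : b + 2 ∉ T ∪ T.image (· + 1) := by
    rw [mem_union, mem_image_succ]
    rintro (hc | ⟨-, hc⟩)
    · exact (hsep _ hc).2.2.1 rfl
    · exact ((hsep _ hc).2.2.2.2.2 (by omega)).elim
  have h2 : b + 1 ∉ insert (b+2) (T ∪ T.image (· + 1)) := by
    rw [mem_insert, mem_union, mem_image_succ]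
    rintro (hc | hc | ⟨-, hc⟩)
    · omega
    · exact (hsep _ hc).2.1 rfl
    · exact ((hsep _ hc).2.2.2.2.1 (by omega)).elim
  have h3 : b ∉ insert (b+1) (insert (b+2) (T ∪ T.image (· + 1))) := by
    rw [mem_insert, mem_insert, mem_union, mem_image_succ]
    rintro (hc | hc | hc | ⟨hb1, hc⟩)
    · omega
    · omega
    · exact (hsep _ hc).1 rfl
    · exact ((hsep _ hc).2.2.2.1 (by omega)).elim
  rw [NF, card_insert_of_notMem h3, card_insert_of_notMem h2,
    card_insert_of_notMem h1, card_union_of_disjoint hd,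
    Finset.card_image_of_injective _ (add_left_injective 1)]
  omega


variable {m b : ℕ} {T : Finset ℕ}

lemma NF_lt (h : Valid m b T) : ∀ x ∈ NF b T, x < m := by
  intro x hx
  simp only [NF, mem_insert, mem_union, mem_image_succ] at hx
  have h1 := h.1
  rcases hx with rfl | rfl | rfl | hx | ⟨h2, hx⟩
  · omega
  · omega
  · omega
  · have := h.2.1 x hx; omega
  · have := h.2.1 _ hx; omega

lemma encPerm_fixed_card (h : Valid m b T) (o : Bool) :
    (Finset.univ.filter fun i : Fin m => encPerm h o i = i).card
      = m - (2 * T.card + 3) := by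
  classical
  have key : (Finset.univ.filter fun i : Fin m => ¬ encPerm h o i = i)
      = (NF b T).attachFin (NF_lt h) := by
    ext i
    simp only [mem_filter, mem_univ, true_and, Finset.mem_attachFin]
    rw [← gfun_ne_self_iff h (o := o)]
    simp [Fin.ext_iff]
  have h2 := Finset.card_filter_add_card_filter_not
    (s := (Finset.univ : Finset (Fin m))) (p := fun i : Fin m => encPerm h o i = i)
  rw [key, Finset.card_attachFin, card_NF h, Finset.card_univ, Fintype.card_fin] at h2
  omega

lemma encPerm_up_sum (h : Valid m b T) (o : Bool) :
    ∑ i ∈ Finset.univ.filter (fun i : Fin m => i < encPerm h o i),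
      ((encPerm h o i : ℕ) - (i : ℕ)) = T.card + 2 := by
  classical
  rw [Finset.sum_filter]
  have step1 : ∀ i : Fin m, (if i < encPerm h o i then (encPerm h o i : ℕ) - ↑i else 0)
      = (fun n => if n < gfun o b T n then gfun o b T n - n else 0) (i : ℕ) := by
    intro i
    simp only [Fin.lt_def, encPerm_apply]
  set F := fun n => if n < gfun o b T n then gfun o b T n - n else 0 with hF
  have trans : (∑ i : Fin m, if i < encPerm h o i then ((encPerm h o i : ℕ) - (i : ℕ)) else 0)
      = ∑ n ∈ Finset.range m, F n := by
    rw [← Fin.sum_univ_eq_sum_range F m]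
    exact Finset.sum_congr rfl (fun i _ => step1 i)
  rw [trans]
  set U : Finset ℕ := (cond o {b, b+1} {b}) ∪ T with hU
  have hUsub : U ⊆ Finset.range m := by
    intro x hx
    rw [hU, mem_union] at hx
    rw [mem_range]
    have h1 := h.1
    rcases hx with hx | hx
    · cases o <;> simp at hx <;> omega
    · have := h.2.1 x hx; omega
  have hzero : ∀ x ∈ Finset.range m, x ∉ U → F x = 0 := by
    intro x hx hxU
    rw [hU, mem_union, not_or] at hxU
    rcases pos_cases h x with rfl | rfl | rfl | hx' | hx' | hx'
    · exfalso; apply hxU.1; cases o <;> simp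
    · cases o with
      | false =>
        rw [hF]; simp only
        rw [gfun_b1]
        simp
      | true => exfalso; apply hxU.1; simp
    · rw [hF]; simp only
      rw [gfun_b2]
      cases o <;> simp
    · exact (hxU.2 hx').elim
    · rw [hF]; simp only
      have hx'' : (x - 1) + 1 = x := by omega
      rw [← hx'', gfun_T1 h hx'.2]
      simp
    · rw [hF]; simp only
      rw [gfun_id h hx'.1 hx'.2.1 hx'.2.2]
      simp
  rw [← Finset.sum_subset hUsub hzero, hU]
  have hdisj : Disjoint (cond o {b, b+1} {b} : Finset ℕ) T := by
    rw [Finset.disjoint_left]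
    intro a ha haT
    have := h.sep a haT
    cases o <;> simp at ha <;> omega
  rw [Finset.sum_union hdisj]
  have hsumT : ∑ x ∈ T, F x = T.card := by
    have hone : ∀ x ∈ T, F x = 1 := by
      intro x hx
      rw [hF]; simp only
      rw [gfun_T h hx]
      simp
    rw [Finset.sum_congr rfl hone, Finset.sum_const, smul_eq_mul, mul_one]
  rw [hsumT]
  cases o with
  | false =>
    simp only [cond_false, Finset.sum_singleton]
    rw [hF]; simp only
    rw [gfun_b]
    simp only [cond_false]
    rw [if_pos (by omega)]
    omega
  | true =>
    simp only [cond_true]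
    rw [Finset.sum_pair (by omega)]
    have e1 : F b = 1 := by
      rw [hF]; simp only
      rw [gfun_b]; simp only [cond_true]
      rw [if_pos (by omega)]; omega
    have e2 : F (b+1) = 1 := by
      rw [hF]; simp only
      rw [gfun_b1]; simp only [cond_true]
      rw [if_pos (by omega)]; omega
    rw [e1, e2]
    omega

/-- If an injective map sends some `i > x` to a value `≤ x`, it must send some
`i' ≤ x` to a value `> x`. -/
lemma cross_down {f : ℕ → ℕ} (hf : Function.Injective f) {x i : ℕ}
    (hi : x < i) (hfi : f i ≤ x) : ∃ i', i' ≤ x ∧ x < f i' := by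
  by_contra hcon
  push_neg at hcon
  let g : Fin (x+1) → Fin (x+1) := fun a => ⟨f a, by
    have := hcon a (by omega)
    omega⟩
  have hginj : Function.Injective g := by
    intro a b hab
    have : f a = f b := congrArg Fin.val hab
    exact Fin.ext (by exact_mod_cast hf this)
  have hgsurj := (Finite.injective_iff_surjective).1 hginj
  obtain ⟨a, ha⟩ := hgsurj ⟨f i, by omega⟩
  have : f (a : ℕ) = f i := congrArg Fin.val ha
  have := hf this
  omega

/-- If a surjective map sends some `i ≤ x` to a value `> x`, it must send some
`i' > x` to a value `≤ x`. -/
lemma cross_up {f : ℕ → ℕ} (hfs : Function.Surjective f)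
    (hfi : Function.Injective f) {x i : ℕ}
    (hi : i ≤ x) (hfx : x < f i) : ∃ i', x < i' ∧ f i' ≤ x := by
  by_contra hcon
  push_neg at hcon
  -- every value ≤ x has its preimage ≤ x
  have hpre : ∀ v : ℕ, v ≤ x → ∃ n, n ≤ x ∧ f n = v := by
    intro v hv
    obtain ⟨n, hn⟩ := hfs v
    refine ⟨n, ?_, hn⟩
    by_contra hnx
    have := hcon n (by omega)
    omega
  let g : Fin (x+1) → Fin (x+1) := fun v => ⟨(hpre v (by omega)).choose, by
    have := (hpre v (by omega)).choose_spec.1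
    omega⟩
  have hginj : Function.Injective g := by
    intro a b hab
    have h1 := (hpre a (by omega)).choose_spec.2
    have h2 := (hpre b (by omega)).choose_spec.2
    have : (g a : ℕ) = (g b : ℕ) := congrArg Fin.val hab
    apply Fin.ext
    rw [← h1, ← h2]
    simp only [g] at this
    rw [this]
  have hgsurj := (Finite.injective_iff_surjective).1 hginj
  obtain ⟨v, hv⟩ := hgsurj ⟨i, by omega⟩
  have hfv := (hpre v (by omega)).choose_spec.2
  have : (g v : ℕ) = i := congrArg Fin.val hv
  simp only [g] at this
  rw [this] at hfv
  -- f i = v ≤ x, contradiction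
  omega

section Structure

variable {P : ℕ → ℕ} {i₀ : ℕ}
variable (hinj : Function.Injective P) (hsurj : Function.Surjective P)
variable (H1 : ∀ n, P n = n ∨ P n = n + 1 ∨ n = P n + 1 ∨
  (n = i₀ ∧ (P n = n + 2 ∨ n = P n + 2)))

include hinj hsurj H1

/-- Structure of an ascent: `P j = j + 1` forces a domino, the start of an
(A)-triple, or the middle of an (A)-triple. -/
lemma lemS (j : ℕ) (hj : P j = j + 1) :
    P (j+1) = j ∨ (P (j+1) = j + 2 ∧ P (j+2) = j) ∨
      (∃ a, j = a + 1 ∧ P (j+1) = a ∧ P a = j) := by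
  obtain ⟨y, hy⟩ := hsurj j
  have hy_ne : y ≠ j := by
    intro h; rw [h] at hy; omega
  rcases H1 y with h | h | h | ⟨hyi, h | h⟩
  · rw [h] at hy; exact absurd hy hy_ne
  · -- P y = y + 1 = j, i.e. ascent just below j
    have hyj : y + 1 = j := by omega
    obtain ⟨i', hi'1, hi'2⟩ := cross_up hsurj hinj (le_refl j) (by omega : j < P j)
    rcases H1 i' with g | g | g | ⟨hii, g | g⟩
    · omega
    · omega
    · -- i' = P i' + 1 with i' > j, P i' ≤ j forces i' = j + 1, P (j+1) = j
      have hij : i' = j + 1 := by omega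
      rw [hij] at g
      have hPj1 : P (j+1) = j := by omega
      have := hinj (hPj1.trans hy.symm)
      omega
    · omega
    · -- i' = P i' + 2 : i' = j+1 or j+2
      have : i' = j + 1 ∨ i' = j + 2 := by omega
      rcases this with rfl | rfl
      · right; right
        exact ⟨y, by omega, by omega, hy⟩
      · have hPj2 : P (j+2) = j := by omega
        have := hinj (hPj2.trans hy.symm)
        omega
  · -- y = P y + 1 : y = j + 1, the domino case
    left
    have : j + 1 = y := by omega
    rw [this]; exact hy
  · -- y = i₀, P y = y + 2 = j: impossible
    exfalso
    have hyj : y + 2 = j := by omega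
    obtain ⟨i', hi'1, hi'2⟩ := cross_up hsurj hinj (by omega : y ≤ y + 1)
      (by omega : y + 1 < P y)
    rcases H1 i' with g | g | g | ⟨hii, g | g⟩
    · omega
    · omega
    · -- i' = P i' + 1 ≤ y + 2 → i' = y + 2 = j, P j = y + 1 = j - 1 vs P j = j+1
      have hij : i' = j := by omega
      rw [hij] at g
      omega
    · omega
    · -- i' = P i' + 2 ≤ y + 3, i' > y + 1 → i' ∈ {y+2, y+3} but i' = i₀ = y
      omega
  · -- y = i₀, y = P y + 2, P y = j: y = j + 2, the (A)-triple with top at j+2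
    right; left
    have hyj : y = j + 2 := by omega
    rcases H1 (j+1) with g | g | g | ⟨hii, g⟩
    · have := hinj (g.trans hj.symm); omega
    · exact ⟨g, by rw [← hyj] at *; exact hy⟩
    · -- P (j+1) = j = P y
      have hg : P (j+1) = j := by omega
      have := hinj (hg.trans hy.symm)
      omega
    · omega

/-- Structure of a descent: `P (j+1) = j` forces a domino, the start of a
(B)-triple, or the middle/top of a (B)-triple. -/
lemma lemS' (j : ℕ) (hj : P (j+1) = j) :
    P j = j + 1 ∨ P j = j + 2 ∨ (∃ a, j = a + 1 ∧ P a = j + 1 ∧ P j = a) := by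
  rcases H1 j with h | h | h | ⟨hji, h | h⟩
  · have := hinj (h.trans hj.symm); omega
  · exact Or.inl h
  · -- j = P j + 1 : descent at j too
    obtain ⟨i', hi'1, hi'2⟩ := cross_down hinj (by omega : j < j + 1) (le_of_eq hj)
    rcases H1 i' with g | g | g | ⟨hii, g | g⟩
    · omega
    · -- P i' = i' + 1 > j, i' ≤ j → i' = j: P j = j + 1 contradicts h
      have hij : i' = j := by omega
      rw [hij] at g
      omega
    · omega
    · -- i' = i₀, P i' = i' + 2 > j → i' = j - 1 or j; i' = j impossible
      have : i' + 1 = j ∨ i' = j := by omega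
      rcases this with hij | hij
      · right; right
        exact ⟨i', by omega, by omega, by omega⟩
      · rw [hij] at g; omega
    · omega
  · exact Or.inr (Or.inl h)
  · -- j = i₀, P j = j - 2 : impossible
    exfalso
    have hj2 : 2 ≤ j := by omega
    obtain ⟨i', hi'1, hi'2⟩ := cross_down hinj (by omega : j - 1 < j)
      (by omega : P j ≤ j - 1)
    rcases H1 i' with g | g | g | ⟨hii, g | g⟩
    · omega
    · have hij : i' + 1 = j := by omega
      have : P i' = j := by omega
      have heq := hinj (this.trans hj.symm)
      omega
    · omega
    · omega
    · omega

end Structure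

variable {m : ℕ}

/-- Extension of a permutation of `Fin m` to `ℕ`, identity outside `[0, m)`. -/
def Pfun (π : Equiv.Perm (Fin m)) : ℕ → ℕ := fun n =>
  if h : n < m then (π ⟨n, h⟩ : ℕ) else n

lemma Pfun_apply (π : Equiv.Perm (Fin m)) (i : Fin m) : Pfun π i = π i := by
  simp [Pfun, i.2, Fin.eta]

lemma Pfun_lt (π : Equiv.Perm (Fin m)) {n : ℕ} (hn : n < m) : Pfun π n < m := by
  rw [Pfun, dif_pos hn]
  exact (π ⟨n, hn⟩).2

lemma Pfun_ge (π : Equiv.Perm (Fin m)) {n : ℕ} (hn : m ≤ n) : Pfun π n = n :=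
  dif_neg (by omega)

lemma Pfun_inj (π : Equiv.Perm (Fin m)) : Function.Injective (Pfun π) := by
  intro a b hab
  by_cases ha : a < m <;> by_cases hb : b < m
  · rw [Pfun, dif_pos ha, Pfun, dif_pos hb] at hab
    have := π.injective (Fin.ext hab)
    exact congrArg Fin.val this
  · rw [Pfun, dif_pos ha, Pfun, dif_neg hb] at hab
    have := (π ⟨a, ha⟩).2
    omega
  · rw [Pfun, dif_neg ha, Pfun, dif_pos hb] at hab
    have := (π ⟨b, hb⟩).2
    omega
  · rwa [Pfun, dif_neg ha, Pfun, dif_neg hb] at hab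

lemma Pfun_symm_cancel (π : Equiv.Perm (Fin m)) (n : ℕ) :
    Pfun π.symm (Pfun π n) = n := by
  by_cases h : n < m
  · have e1 : Pfun π n = ↑(π ⟨n, h⟩) := dif_pos h
    rw [e1]
    have e2 : Pfun π.symm ↑(π ⟨n, h⟩) = ↑(π.symm ⟨↑(π ⟨n, h⟩), (π ⟨n, h⟩).2⟩) :=
      dif_pos (π ⟨n, h⟩).2
    rw [e2]
    simp
  · have e1 : Pfun π n = n := dif_neg h
    rw [e1]
    exact dif_neg h

lemma Pfun_surj (π : Equiv.Perm (Fin m)) : Function.Surjective (Pfun π) := by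
  intro v
  exact ⟨Pfun π.symm v, by
    have := Pfun_symm_cancel π.symm v
    simpa using this⟩

/-- Conversion of the fixed-point count to `Pfun`. -/
lemma nonfix_card (π : Equiv.Perm (Fin m)) {ℓ : ℕ}
    (hfix : (Finset.univ.filter fun i : Fin m => π i = i).card = ℓ) :
    ((range m).filter fun n => Pfun π n ≠ n).card = m - ℓ := by
  classical
  have hsub : ∀ x ∈ (range m).filter fun n => Pfun π n ≠ n, x < m := by
    intro x hx
    exact mem_range.1 (mem_filter.1 hx).1
  have key : (Finset.univ.filter fun i : Fin m => ¬ π i = i)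
      = ((range m).filter fun n => Pfun π n ≠ n).attachFin hsub := by
    ext i
    simp only [mem_filter, mem_univ, true_and, Finset.mem_attachFin, mem_range]
    rw [Pfun_apply]
    constructor
    · intro h
      exact ⟨i.2, fun hc => h (Fin.ext hc)⟩
    · intro ⟨h1, h2⟩ hc
      exact h2 (congrArg Fin.val hc)
  have h2 := Finset.card_filter_add_card_filter_not
    (s := (Finset.univ : Finset (Fin m))) (p := fun i : Fin m => π i = i)
  rw [hfix, key, Finset.card_attachFin, Finset.card_univ, Fintype.card_fin] at h2
  have hlm : ℓ ≤ m := by omega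
  omega

/-- Conversion of the ascent sum to `Pfun`. -/
lemma sum_up_eq (π : Equiv.Perm (Fin m)) :
    ∑ i ∈ Finset.univ.filter (fun i : Fin m => i < π i), ((π i : ℕ) - (i : ℕ))
      = ∑ n ∈ range m, (if n < Pfun π n then Pfun π n - n else 0) := by
  rw [Finset.sum_filter, ← Fin.sum_univ_eq_sum_range
    (fun n => if n < Pfun π n then Pfun π n - n else 0) m]
  apply Finset.sum_congr rfl
  intro i _
  simp only [Fin.lt_def, Pfun_apply]

/-- The total descent equals the total ascent. -/
lemma sum_down_eq (π : Equiv.Perm (Fin m)) :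
    ∑ n ∈ range m, (if Pfun π n < n then n - Pfun π n else 0)
      = ∑ n ∈ range m, (if n < Pfun π n then Pfun π n - n else 0) := by
  have hP : ∑ n ∈ range m, ((Pfun π n : ℤ)) = ∑ n ∈ range m, (n : ℤ) := by
    apply Finset.sum_nbij' (i := fun n => Pfun π n) (j := fun n => Pfun π.symm n)
    · intro a ha
      exact mem_range.2 (Pfun_lt π (mem_range.1 ha))
    · intro a ha
      exact mem_range.2 (Pfun_lt π.symm (mem_range.1 ha))
    · intro a _
      exact Pfun_symm_cancel π a
    · intro a _
      have := Pfun_symm_cancel π.symm a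
      simpa using this
    · intro a _
      rfl
  have key : ∑ n ∈ range m,
      (((if n < Pfun π n then Pfun π n - n else 0 : ℕ) : ℤ)
        - ((if Pfun π n < n then n - Pfun π n else 0 : ℕ) : ℤ))
      = 0 := by
    have : ∀ n ∈ range m,
        (((if n < Pfun π n then Pfun π n - n else 0 : ℕ) : ℤ)
          - ((if Pfun π n < n then n - Pfun π n else 0 : ℕ) : ℤ))
        = (Pfun π n : ℤ) - n := by
      intro n _
      split_ifs <;> omega
    rw [Finset.sum_congr rfl this, Finset.sum_sub_distrib, hP]
    omega
  rw [Finset.sum_sub_distrib] at key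
  have h1 : ((∑ n ∈ range m, (if n < Pfun π n then Pfun π n - n else 0) : ℕ) : ℤ)
      = ∑ n ∈ range m, ((if n < Pfun π n then Pfun π n - n else 0 : ℕ) : ℤ) := by
    push_cast; rfl
  have h2 : ((∑ n ∈ range m, (if Pfun π n < n then n - Pfun π n else 0) : ℕ) : ℤ)
      = ∑ n ∈ range m, ((if Pfun π n < n then n - Pfun π n else 0 : ℕ) : ℤ) := by
    push_cast; rfl
  omega

/-- In a finset where each value is `≥ 1` and the total exceeds the cardinality
by one, exactly one element has value 2 and the rest value 1. -/
lemma exists_unique_two {s : Finset ℕ} {f : ℕ → ℕ}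
    (h1 : ∀ n ∈ s, 1 ≤ f n) (hsum : ∑ n ∈ s, f n = s.card + 1) :
    ∃ a ∈ s, f a = 2 ∧ ∀ c ∈ s, c ≠ a → f c = 1 := by
  classical
  have hkey : ∑ n ∈ s, (f n - 1) = 1 := by
    have : ∀ n ∈ s, f n = (f n - 1) + 1 := fun n hn => by have := h1 n hn; omega
    rw [Finset.sum_congr rfl this, Finset.sum_add_distrib, Finset.sum_const,
      smul_eq_mul, mul_one] at hsum
    omega
  have hex : ∃ a ∈ s, f a - 1 ≠ 0 := by
    by_contra hc
    push_neg at hc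
    rw [Finset.sum_eq_zero hc] at hkey
    omega
  obtain ⟨a, ha, hfa⟩ := hex
  have hle : f a - 1 ≤ 1 :=
    le_trans (Finset.single_le_sum (f := fun n => f n - 1)
      (fun i _ => Nat.zero_le _) ha) (le_of_eq hkey)
  have hfa2 : f a = 2 := by have := h1 a ha; omega
  refine ⟨a, ha, hfa2, fun c hc hca => ?_⟩
  have herase : ∑ n ∈ s.erase a, (f n - 1) = 0 := by
    have hh := Finset.add_sum_erase s (fun n => f n - 1) ha
    omega
  have hz := (Finset.sum_eq_zero_iff).1 herase c (Finset.mem_erase.2 ⟨hca, hc⟩)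
  have := h1 c hc
  omega



section Decode

variable {m ℓ : ℕ}

lemma decode_tail (π : Equiv.Perm (Fin m)) {i₀ b : ℕ} (o : Bool)
    (hfix : (Finset.univ.filter fun i : Fin m => π i = i).card = ℓ)
    (H1 : ∀ n, Pfun π n = n ∨ Pfun π n = n + 1 ∨ n = Pfun π n + 1 ∨
      (n = i₀ ∧ (Pfun π n = n + 2 ∨ n = Pfun π n + 2)))
    (hi₀m : i₀ < m)
    (horient :
      (o = true ∧ Pfun π b = b+1 ∧ Pfun π (b+1) = b+2 ∧ Pfun π (b+2) = b ∧ i₀ = b + 2)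
      ∨ (o = false ∧ Pfun π b = b+2 ∧ Pfun π (b+1) = b ∧ Pfun π (b+2) = b+1 ∧ i₀ = b)) :
    ∃ (T : Finset ℕ) (h : Valid m b T), T.card = (m - ℓ - 3) / 2 ∧ π = encPerm h o := by
  classical
  have hinj := Pfun_inj π
  have hsurj := Pfun_surj π
  have hS := fun j hj => lemS hinj hsurj H1 j hj
  have hS' := fun j hj => lemS' hinj hsurj H1 j hj
  have hb3 : b + 3 ≤ m := by
    rcases horient with ⟨-, hb, -, -, hio⟩ | ⟨-, hb, -, -, hio⟩
    · omega
    · have := Pfun_lt π (show b < m by omega)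
      omega
  set T : Finset ℕ := ((range m).filter (fun n => Pfun π n = n + 1)) \ {b, b+1, b+2}
    with hT
  have hmemT : ∀ j, j ∈ T ↔
      (j < m ∧ Pfun π j = j + 1 ∧ j ≠ b ∧ j ≠ b+1 ∧ j ≠ b+2) := by
    intro j
    simp only [hT, mem_sdiff, mem_filter, mem_range, mem_insert, mem_singleton]
    tauto
  have hpair : ∀ j ∈ T, Pfun π (j + 1) = j := by
    intro j hj
    obtain ⟨hjm, hjP, hj1, hj2, hj3⟩ := (hmemT j).1 hj
    rcases hS j hjP with c1 | ⟨c2a, c2b⟩ | ⟨a, ha1, ha2, ha3⟩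
    · exact c1
    · exfalso
      have hji : j + 2 = i₀ := by
        rcases H1 (j+2) with g | g | g | ⟨gi, g⟩ <;> omega
      rcases horient with ⟨-, hb, hb1', hb2', hio⟩ | ⟨-, hb, hb1', hb2', hio⟩
      · omega
      · have hx : Pfun π (j+1) = b := by omega
        have := hinj (hx.trans hb1'.symm)
        omega
    · exfalso
      have hji : j + 1 = i₀ := by
        rcases H1 (j+1) with g | g | g | ⟨gi, g⟩ <;> omega
      rcases horient with ⟨-, hb, hb1', hb2', hio⟩ | ⟨-, hb, hb1', hb2', hio⟩
      · omega
      · have hx : j + 1 = b := by omega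
        rw [hx] at ha2
        omega
  have hgap : ∀ i ∈ T, ∀ j ∈ T, i < j → i + 2 ≤ j := by
    intro i hi j hj hij
    by_contra hc
    have hji : j = i + 1 := by omega
    have h1 := hpair i hi
    have h2 := ((hmemT j).1 hj).2.1
    rw [hji] at h2
    omega
  have hsep2 : ∀ j ∈ T, j + 2 ≤ b ∨ b + 3 ≤ j := by
    intro j hj
    obtain ⟨hjm, hjP, hj1, hj2, hj3⟩ := (hmemT j).1 hj
    by_contra hc
    push_neg at hc
    have hjb : j + 1 = b := by omega
    have hp := hpair j hj
    rw [hjb] at hp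
    rcases horient with ⟨-, hb, -, -, -⟩ | ⟨-, hb, -, -, -⟩ <;> omega
  have hvalid : Valid m b T := ⟨hb3, fun j hj => by
      have h1 := (hmemT j).1 hj
      have := Pfun_lt π h1.1
      omega, hgap, hsep2⟩
  have hNF : ((range m).filter fun n => Pfun π n ≠ n) = NF b T := by
    ext n
    simp only [mem_filter, mem_range, NF, mem_insert, mem_union, mem_image_succ]
    constructor
    · rintro ⟨hnm, hnP⟩
      rcases H1 n with g | g | g | ⟨gi, g⟩
      · exact absurd g hnP
      · by_cases hnb : n = b ∨ n = b + 1 ∨ n = b + 2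
        · tauto
        · push_neg at hnb
          right; right; right; left
          exact (hmemT n).2 ⟨hnm, g, hnb.1, hnb.2.1, hnb.2.2⟩
      · have hp : Pfun π (Pfun π n + 1) = Pfun π n := by
          rw [← g]
        rcases hS' (Pfun π n) hp with c1 | c2 | ⟨a, ha1, ha2, ha3⟩
        · by_cases hvb : Pfun π n = b ∨ Pfun π n = b + 1 ∨ Pfun π n = b + 2
          · rcases horient with ⟨-, hb, hb1', hb2', -⟩ | ⟨-, hb, hb1', hb2', -⟩ <;>
              rcases hvb with hv | hv | hv
            · right; left; omega
            · right; right; left; omega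
            · exfalso; rw [hv] at c1; omega
            · exfalso; rw [hv] at c1; omega
            · exfalso; rw [hv] at c1; omega
            · exfalso; rw [hv] at c1; omega
          · push_neg at hvb
            have hvm : Pfun π n < m := by omega
            have hvT : Pfun π n ∈ T :=
              (hmemT _).2 ⟨hvm, c1, hvb.1, hvb.2.1, hvb.2.2⟩
            right; right; right; right
            refine ⟨by omega, ?_⟩
            rw [show n - 1 = Pfun π n by omega]
            exact hvT
        · have hvi : Pfun π n = i₀ := by
            rcases H1 (Pfun π n) with g' | g' | g' | ⟨gi', g'⟩ <;> omega
          rcases horient with ⟨-, -, -, hb2', hio⟩ | ⟨-, -, -, -, hio⟩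
          · exfalso
            rw [hio] at hvi
            rw [hvi] at c2
            omega
          · right; left; omega
        · have hai : a = i₀ := by
            rcases H1 a with g' | g' | g' | ⟨gi', g'⟩ <;> omega
          rcases horient with ⟨-, -, -, hb2', hio⟩ | ⟨-, -, -, -, hio⟩
          · exfalso
            rw [hio] at hai
            rw [hai] at ha2
            omega
          · right; right; left; omega
      · rcases horient with ⟨-, -, -, -, hio⟩ | ⟨-, -, -, -, hio⟩
        · right; right; left; omega
        · left; omega
    · rintro (rfl | rfl | rfl | hn | ⟨h1, h2⟩)
      · exact ⟨by omega, by
          rcases horient with ⟨-, hb, -⟩ | ⟨-, hb, -⟩ <;> omega⟩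
      · exact ⟨by omega, by
          rcases horient with ⟨-, -, hb1', -⟩ | ⟨-, -, hb1', -⟩ <;> omega⟩
      · exact ⟨by omega, by
          rcases horient with ⟨-, -, -, hb2', -⟩ | ⟨-, -, -, hb2', -⟩ <;> omega⟩
      · obtain ⟨hnm, hnP, -⟩ := (hmemT n).1 hn
        exact ⟨hnm, by omega⟩
      · have hT' := (hmemT (n-1)).1 h2
        have hp := hpair (n-1) h2
        rw [show n - 1 + 1 = n by omega] at hp
        have : Pfun π (n-1) = n - 1 + 1 := hT'.2.1
        refine ⟨?_, by omega⟩
        have := Pfun_lt π hT'.1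
        omega
  have hTcard : T.card = (m - ℓ - 3) / 2 := by
    have h1 := nonfix_card π hfix
    rw [hNF, card_NF hvalid] at h1
    have hlm : ℓ ≤ m := by
      by_contra hc
      push_neg at hc
      have : m - ℓ = 0 := by omega
      omega
    omega
  have hpoint : ∀ i : Fin m, (π i : ℕ) = gfun o b T (i : ℕ) := by
    intro i
    have hPi : Pfun π (i : ℕ) = π i := Pfun_apply π i
    rcases pos_cases hvalid (i : ℕ) with hc | hc | hc | hc | hc | hc
    · rw [← hPi, hc, gfun_b]
      rcases horient with ⟨ho, hb, -⟩ | ⟨ho, hb, -⟩ <;> subst ho <;> simpa using hb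
    · rw [← hPi, hc, gfun_b1]
      rcases horient with ⟨ho, -, hb1', -⟩ | ⟨ho, -, hb1', -⟩ <;> subst ho <;>
        simpa using hb1'
    · rw [← hPi, hc, gfun_b2]
      rcases horient with ⟨ho, -, -, hb2', -⟩ | ⟨ho, -, -, hb2', -⟩ <;> subst ho <;>
        simpa using hb2'
    · rw [← hPi, gfun_T hvalid hc]
      exact ((hmemT _).1 hc).2.1
    · have hg := gfun_T1 (o := o) hvalid hc.2
      rw [show (i:ℕ) - 1 + 1 = (i:ℕ) by omega] at hg
      have hp := hpair _ hc.2
      rw [show (i:ℕ) - 1 + 1 = (i:ℕ) by omega] at hp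
      rw [← hPi, hg]
      exact hp
    · rw [← hPi, gfun_id hvalid hc.1 hc.2.1 hc.2.2]
      by_contra hne
      have hmem : (i:ℕ) ∈ NF b T := by
        rw [← hNF]
        exact mem_filter.2 ⟨mem_range.2 i.2, hne⟩
      simp only [NF, mem_insert, mem_union, mem_image_succ] at hmem
      tauto
  refine ⟨T, hvalid, hTcard, ?_⟩
  apply Equiv.ext
  intro i
  apply Fin.ext
  rw [hpoint i]
  rfl

lemma decode (π : Equiv.Perm (Fin m)) (hml : ℓ + 3 ≤ m) (hpar : (m - ℓ) % 2 = 1)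
    (hfix : (Finset.univ.filter fun i : Fin m => π i = i).card = ℓ)
    (hsum : ∑ i ∈ Finset.univ.filter (fun i : Fin m => i < π i),
      ((π i : ℕ) - (i : ℕ)) = (m - ℓ + 1) / 2) :
    ∃ (b : ℕ) (T : Finset ℕ) (h : Valid m b T) (o : Bool),
      T.card = (m - ℓ - 3) / 2 ∧ π = encPerm h o := by
  classical
  have hinj := Pfun_inj π
  have hsurj := Pfun_surj π
  have hup : ∑ n ∈ range m, (if n < Pfun π n then Pfun π n - n else 0)
      = (m - ℓ + 1) / 2 := by
    rw [← sum_up_eq]; exact hsum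
  have hdown : ∑ n ∈ range m, (if Pfun π n < n then n - Pfun π n else 0)
      = (m - ℓ + 1) / 2 := by
    rw [sum_down_eq]; exact hup
  have hNcard : ((range m).filter fun n => Pfun π n ≠ n).card = m - ℓ :=
    nonfix_card π hfix
  have hsum2 : ∑ n ∈ (range m).filter (fun n => Pfun π n ≠ n),
      ((if n < Pfun π n then Pfun π n - n else 0)
        + (if Pfun π n < n then n - Pfun π n else 0)) = m - ℓ + 1 := by
    rw [Finset.sum_filter_of_ne (by
      intro x hx h0
      intro hfx
      apply h0
      rw [if_neg (by omega), if_neg (by omega)]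
      rfl), Finset.sum_add_distrib, hup, hdown]
    omega
  obtain ⟨i₀, hi₀N, hi₀2, hrest⟩ := exists_unique_two
    (s := (range m).filter (fun n => Pfun π n ≠ n))
    (f := fun n => (if n < Pfun π n then Pfun π n - n else 0)
      + (if Pfun π n < n then n - Pfun π n else 0))
    (fun n hn => by
      have := (mem_filter.1 hn).2
      show 1 ≤ (if n < Pfun π n then Pfun π n - n else 0)
        + (if Pfun π n < n then n - Pfun π n else 0)
      split_ifs <;> omega)
    (by rw [hsum2, hNcard])
  have hi₀m : i₀ < m := mem_range.1 (mem_filter.1 hi₀N).1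
  have H1 : ∀ n, Pfun π n = n ∨ Pfun π n = n + 1 ∨ n = Pfun π n + 1 ∨
      (n = i₀ ∧ (Pfun π n = n + 2 ∨ n = Pfun π n + 2)) := by
    intro n
    by_cases hnm : n < m
    · by_cases hfx : Pfun π n = n
      · exact Or.inl hfx
      · have hnN : n ∈ (range m).filter fun n => Pfun π n ≠ n :=
          mem_filter.2 ⟨mem_range.2 hnm, hfx⟩
        by_cases hni : n = i₀
        · right; right; right
          refine ⟨hni, ?_⟩
          have h2 := hi₀2
          rw [← hni] at h2
          split_ifs at h2 <;> omega
        · have h2 := hrest n hnN hni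
          split_ifs at h2 <;> omega
    · exact Or.inl (Pfun_ge π (by omega))
  have hS := fun j hj => lemS hinj hsurj H1 j hj
  have hi₀d : Pfun π i₀ = i₀ + 2 ∨ i₀ = Pfun π i₀ + 2 := by
    have h2 := hi₀2
    split_ifs at h2 <;> omega
  rcases hi₀d with hB | hA
  · -- orientation "false": i₀ = b is the bottom of the triple
    have key1 : Pfun π (i₀ + 1) = i₀ := by
      obtain ⟨y, hy⟩ := hsurj i₀
      rcases H1 y with g | g | g | ⟨gi, g⟩
      · have hyi : y = i₀ := by omega
        rw [hyi] at hy
        omega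
      · have hyi : y + 1 = i₀ := by omega
        exfalso
        rcases hS y g with c1 | ⟨c2a, c2b⟩ | ⟨a, ha1, ha2, ha3⟩
        · rw [hyi] at c1; omega
        · rw [hyi] at c2a; omega
        · rw [hyi] at ha2; omega
      · have hyi : y = i₀ + 1 := by omega
        rw [hyi] at hy
        exact hy
      · rw [gi] at hy
        omega
    have key2 : Pfun π (i₀ + 2) = i₀ + 1 := by
      obtain ⟨w, hw⟩ := hsurj (i₀ + 1)
      rcases H1 w with g | g | g | ⟨gi, g⟩
      · have hwi : w = i₀ + 1 := by omega
        rw [hwi] at hw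
        rw [key1] at hw
        omega
      · have hwi : w = i₀ := by omega
        rw [hwi] at hw
        omega
      · have hwi : w = i₀ + 2 := by omega
        rw [hwi] at hw
        exact hw
      · rw [gi] at hw
        omega
    obtain ⟨T, hv, hcard, heq⟩ := decode_tail π false hfix H1 hi₀m
      (Or.inr ⟨rfl, hB, key1, key2, rfl⟩)
    exact ⟨i₀, T, hv, false, hcard, heq⟩
  · -- orientation "true": i₀ = b + 2 is the top of the triple
    set b := Pfun π i₀ with hbdef
    have hii : i₀ = b + 2 := hA
    have hb2 : Pfun π (b + 2) = b := by rw [← hii]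
    have key1 : Pfun π b = b + 1 := by
      obtain ⟨w, hw⟩ := hsurj (b + 1)
      have hwb : w = b ∨ w = b + 1 := by
        rcases H1 w with g | g | g | ⟨gi, g⟩
        · omega
        · omega
        · -- w = P w + 1 = b + 2 : P (b+2) = b+1 contradicts hb2
          exfalso
          have hwi : w = b + 2 := by omega
          rw [hwi] at hw
          omega
        · -- w = i₀ = b + 2
          exfalso
          rw [gi, hii] at hw
          omega
      rcases hwb with hwb | hwb
      · rw [hwb] at hw; exact hw
      · -- b + 1 is a fixed point: impossible
        exfalso
        rw [hwb] at hw
        obtain ⟨i', hi'1, hi'2⟩ := cross_down hinj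
          (show b + 1 < b + 2 by omega) (show Pfun π (b+2) ≤ b + 1 by omega)
        rcases H1 i' with g | g | g | ⟨gi, g⟩
        · omega
        · have hib : i' = b + 1 := by omega
          rw [hib] at g
          omega
        · omega
        · omega
    have key2 : Pfun π (b + 1) = b + 2 := by
      obtain ⟨v, hv⟩ := hsurj (b + 2)
      rcases H1 v with g | g | g | ⟨gi, g⟩
      · exfalso
        have hvi : v = b + 2 := by omega
        rw [hvi] at hv
        omega
      · have hvi : v = b + 1 := by omega
        rw [hvi] at hv
        exact hv
      · -- v = P v + 1 = b + 3 : descent at b+3 onto b+2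
        exfalso
        have hvi : v = b + 3 := by omega
        rw [hvi] at hv
        obtain ⟨i', hi'1, hi'2⟩ := cross_down hinj
          (show b + 2 < b + 3 by omega) (le_of_eq hv)
        rcases H1 i' with g' | g' | g' | ⟨gi', g'⟩
        · omega
        · have hib : i' = b + 2 := by omega
          rw [hib] at g'
          omega
        · omega
        · have hib : i' = b + 2 := by omega
          rw [hib] at hi'2
          omega
      · exfalso
        rw [gi, hii] at hv
        omega
    obtain ⟨T, hvv, hcard, heq⟩ := decode_tail π true hfix H1 hi₀m
      (Or.inl ⟨rfl, key1, key2, hb2, hii⟩)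
    exact ⟨b, T, hvv, true, hcard, heq⟩

end Decode

section Inj

variable {m b : ℕ} {T : Finset ℕ} {o : Bool}

lemma gfun_up2_iff (h : Valid m b T) (i : ℕ) :
    gfun o b T i = i + 2 ↔ (o = false ∧ i = b) := by
  rcases pos_cases h i with rfl | rfl | rfl | hc | hc | hc
  · rw [gfun_b]; cases o <;> simp <;> omega
  · rw [gfun_b1]; cases o <;> simp <;> omega
  · rw [gfun_b2]; cases o <;> simp <;> omega
  · rw [gfun_T h hc]
    have := h.sep i hc
    constructor
    · omega
    · rintro ⟨-, rfl⟩; omega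
  · have hg := gfun_T1 (o := o) h hc.2
    rw [show i - 1 + 1 = i by omega] at hg
    rw [hg]
    have := h.sep _ hc.2
    constructor
    · omega
    · rintro ⟨-, rfl⟩; omega
  · rw [gfun_id h hc.1 hc.2.1 hc.2.2]
    constructor
    · omega
    · rintro ⟨-, rfl⟩
      exact absurd rfl hc.1.1

lemma gfun_down2_iff (h : Valid m b T) (i : ℕ) :
    i = gfun o b T i + 2 ↔ (o = true ∧ i = b + 2) := by
  rcases pos_cases h i with rfl | rfl | rfl | hc | hc | hc
  · rw [gfun_b]; cases o <;> simp <;> omega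
  · rw [gfun_b1]; cases o <;> simp <;> omega
  · rw [gfun_b2]; cases o <;> simp <;> omega
  · rw [gfun_T h hc]
    have := h.sep i hc
    constructor
    · omega
    · rintro ⟨-, hc'⟩; omega
  · have hg := gfun_T1 (o := o) h hc.2
    rw [show i - 1 + 1 = i by omega] at hg
    rw [hg]
    have := h.sep _ hc.2
    constructor
    · omega
    · rintro ⟨-, hc'⟩; omega
  · rw [gfun_id h hc.1 hc.2.1 hc.2.2]
    constructor
    · omega
    · rintro ⟨-, hc'⟩
      exact absurd hc' hc.1.2.2

lemma gfun_up1_iff (h : Valid m b T) (i : ℕ) :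
    gfun o b T i = i + 1 ↔ (i ∈ T ∨ (o = true ∧ (i = b ∨ i = b + 1))) := by
  have hbT : b ∉ T := fun hc => (h.sep b hc).1 rfl
  have hb1T : b + 1 ∉ T := fun hc => (h.sep _ hc).2.1 rfl
  have hb2T : b + 2 ∉ T := fun hc => (h.sep _ hc).2.2.1 rfl
  rcases pos_cases h i with rfl | rfl | rfl | hc | hc | hc
  · rw [gfun_b]
    cases o with
    | false =>
      simp only [cond_false]
      constructor
      · omega
      · rintro (hc | ⟨hc, -⟩)
        · exact absurd hc hbT
        · exact Bool.noConfusion hc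
    | true => simp
  · rw [gfun_b1]
    cases o with
    | false =>
      simp only [cond_false]
      constructor
      · omega
      · rintro (hc | ⟨hc, -⟩)
        · exact absurd hc hb1T
        · exact Bool.noConfusion hc
    | true => simp
  · rw [gfun_b2]
    cases o with
    | false =>
      simp only [cond_false]
      constructor
      · omega
      · rintro (hc | ⟨hc, -⟩)
        · exact absurd hc hb2T
        · exact Bool.noConfusion hc
    | true =>
      simp only [cond_true]
      constructor
      · omega
      · rintro (hc | ⟨-, hc | hc⟩)
        · exact absurd hc hb2T
        · omega
        · omega
  · rw [gfun_T h hc]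
    simp [hc]
  · have hg := gfun_T1 (o := o) h hc.2
    rw [show i - 1 + 1 = i by omega] at hg
    rw [hg]
    have hiT : i ∉ T := by
      intro hiT
      have := h.2.2.1 _ hc.2 _ hiT (by omega)
      omega
    have := h.sep _ hc.2
    constructor
    · omega
    · rintro (hc' | ⟨-, hc' | hc'⟩)
      · exact absurd hc' hiT
      · omega
      · omega
  · rw [gfun_id h hc.1 hc.2.1 hc.2.2]
    constructor
    · omega
    · rintro (hc' | ⟨-, hc' | hc'⟩)
      · exact absurd hc' hc.2.1
      · exact absurd hc' hc.1.1
      · exact absurd hc' hc.1.2.1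

lemma enc_inj {b b' : ℕ} {T T' : Finset ℕ} {o o' : Bool}
    (h : Valid m b T) (h' : Valid m b' T')
    (heq : encPerm h o = encPerm h' o') : o = o' ∧ b = b' ∧ T = T' := by
  have hg : ∀ i, i < m → gfun o b T i = gfun o' b' T' i := by
    intro i hi
    have := congrArg (fun σ : Equiv.Perm (Fin m) => ((σ ⟨i, hi⟩ : Fin m) : ℕ)) heq
    simpa using this
  have hbm : b < m := by have := h.1; omega
  have hoo : o = o' ∧ b = b' := by
    cases o with
    | false =>
      have h2 : gfun false b T b = b + 2 := (gfun_up2_iff h b).2 ⟨rfl, rfl⟩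
      rw [hg b hbm] at h2
      have h3 := (gfun_up2_iff h' b).1 h2
      exact ⟨h3.1.symm, h3.2⟩
    | true =>
      have h2 : b + 2 = gfun true b T (b+2) + 2 :=
        (gfun_down2_iff h (b+2)).2 ⟨rfl, rfl⟩
      rw [hg (b+2) (by have := h.1; omega)] at h2
      have h3 := (gfun_down2_iff h' (b+2)).1 h2
      exact ⟨h3.1.symm, by omega⟩
  obtain ⟨ho, hb⟩ := hoo
  subst ho hb
  refine ⟨rfl, rfl, ?_⟩
  ext j
  constructor
  · intro hj
    have hjm : j < m := by have := h.2.1 j hj; omega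
    have h1 : gfun o b T j = j + 1 := (gfun_up1_iff h j).2 (Or.inl hj)
    rw [hg j hjm] at h1
    rcases (gfun_up1_iff h' j).1 h1 with hj' | ⟨ho', hj'⟩
    · exact hj'
    · exfalso
      have := h.sep j hj
      omega
  · intro hj
    have hjm : j < m := by have := h'.2.1 j hj; omega
    have h1 : gfun o b T' j = j + 1 := (gfun_up1_iff h' j).2 (Or.inl hj)
    rw [← hg j hjm] at h1
    rcases (gfun_up1_iff h j).1 h1 with hj' | ⟨ho', hj'⟩
    · exact hj'
    · exfalso
      have := h'.sep j hj
      omega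

end Inj

/-- A permutation cannot have exactly `m - 1` fixed points. -/
lemma no_single_nonfixed {m ℓ : ℕ} (π : Equiv.Perm (Fin m)) (hml : m = ℓ + 1)
    (hfix : (Finset.univ.filter fun i : Fin m => π i = i).card = ℓ) : False := by
  classical
  have h2 := Finset.card_filter_add_card_filter_not
    (s := (Finset.univ : Finset (Fin m))) (p := fun i : Fin m => π i = i)
  rw [hfix, Finset.card_univ, Fintype.card_fin] at h2
  have hcard : (Finset.univ.filter fun i : Fin m => ¬ π i = i).card = 1 := by omega
  obtain ⟨a, ha⟩ := Finset.card_eq_one.1 hcard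
  have haa : ¬ π a = a := by
    have : a ∈ Finset.univ.filter fun i : Fin m => ¬ π i = i := by
      rw [ha]; exact mem_singleton_self a
    exact (mem_filter.1 this).2
  have h1 : π a ∈ Finset.univ.filter fun i : Fin m => ¬ π i = i :=
    mem_filter.2 ⟨mem_univ _, fun hc => haa (π.injective hc)⟩
  rw [ha, mem_singleton] at h1
  exact haa h1

end CountMin

/-- For `m ≥ 2` and `ℓ ≤ m` with `m - ℓ` odd, the number of permutations `π ∈ S_m` with
exactly `ℓ` fixed points achieving the minimal value `c(π) = (m - ℓ + 1)/2` of
`c(π) = ∑_{i : π(i) > i} (π(i) - i)` equals `(m - ℓ - 1) · C((m+ℓ-1)/2, ℓ)`. -/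
theorem count_minimal_perms_odd (m ℓ : ℕ) (hm : 2 ≤ m) (hl : ℓ ≤ m)
    (hpar : Odd (m - ℓ)) :
    Nat.card {π : Equiv.Perm (Fin m) //
        (Finset.univ.filter fun i : Fin m => π i = i).card = ℓ ∧
        ∑ i ∈ Finset.univ.filter (fun i : Fin m => i < π i), ((π i : ℕ) - (i : ℕ)) =
          (m - ℓ + 1) / 2} =
      (m - ℓ - 1) * ((m + ℓ - 1) / 2).choose ℓ := by
  classical
  have hmod : (m - ℓ) % 2 = 1 := Nat.odd_iff.1 hpar
  by_cases hml : m = ℓ + 1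
  · have hempty : IsEmpty {π : Equiv.Perm (Fin m) //
        (Finset.univ.filter fun i : Fin m => π i = i).card = ℓ ∧
        ∑ i ∈ Finset.univ.filter (fun i : Fin m => i < π i), ((π i : ℕ) - (i : ℕ)) =
          (m - ℓ + 1) / 2} :=
      ⟨fun ⟨π, hπ⟩ => CountMin.no_single_nonfixed π hml hπ.1⟩
    rw [Nat.card_of_isEmpty, show m - ℓ - 1 = 0 by omega, zero_mul]
  · have hml3 : ℓ + 3 ≤ m := by omega
    set k := (m - ℓ - 3) / 2 with hk
    have hk2 : m - ℓ = 2 * k + 3 := by omega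
    have valid_of_mem : ∀ {p : ℕ × Finset ℕ}, p ∈ CountMin.Tc m k →
        CountMin.Valid m p.1 p.2 := by
      intro p hp
      rw [CountMin.mem_Tc] at hp
      exact ⟨hp.2.1, hp.2.2.1, hp.2.2.2.1, hp.2.2.2.2⟩
    have h1 : Nat.card {π : Equiv.Perm (Fin m) //
        (Finset.univ.filter fun i : Fin m => π i = i).card = ℓ ∧
        ∑ i ∈ Finset.univ.filter (fun i : Fin m => i < π i), ((π i : ℕ) - (i : ℕ)) =
          (m - ℓ + 1) / 2} =
        (Finset.univ.filter (fun π : Equiv.Perm (Fin m) =>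
          (Finset.univ.filter fun i : Fin m => π i = i).card = ℓ ∧
          ∑ i ∈ Finset.univ.filter (fun i : Fin m => i < π i), ((π i : ℕ) - (i : ℕ)) =
            (m - ℓ + 1) / 2)).card := by
      rw [Nat.card_eq_fintype_card, Fintype.card_subtype]
    have h2 : ((Finset.univ : Finset Bool) ×ˢ CountMin.Tc m k).card =
        (Finset.univ.filter (fun π : Equiv.Perm (Fin m) =>
          (Finset.univ.filter fun i : Fin m => π i = i).card = ℓ ∧
          ∑ i ∈ Finset.univ.filter (fun i : Fin m => i < π i), ((π i : ℕ) - (i : ℕ)) =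
            (m - ℓ + 1) / 2)).card := by
      apply Finset.card_bij (i := fun p hp =>
        CountMin.encPerm (valid_of_mem (Finset.mem_product.1 hp).2) p.1)
      · intro p hp
        have hT := (Finset.mem_product.1 hp).2
        have hcard : p.2.2.card = k := (CountMin.mem_Tc.1 hT).1
        refine Finset.mem_filter.2 ⟨Finset.mem_univ _, ?_, ?_⟩
        · rw [CountMin.encPerm_fixed_card, hcard]
          omega
        · rw [CountMin.encPerm_up_sum, hcard]
          omega
      · intro p₁ hp₁ p₂ hp₂ heq
        obtain ⟨ho, hb, hT⟩ := CountMin.enc_inj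
          (valid_of_mem (Finset.mem_product.1 hp₁).2)
          (valid_of_mem (Finset.mem_product.1 hp₂).2) heq
        exact Prod.ext ho (Prod.ext hb hT)
      · intro π hπ
        obtain ⟨hfx, hsm⟩ := (Finset.mem_filter.1 hπ).2
        obtain ⟨b, T, h, o, hcard, heq⟩ := CountMin.decode π hml3 hmod hfx hsm
        refine ⟨(o, (b, T)), Finset.mem_product.2 ⟨Finset.mem_univ _,
          CountMin.mem_Tc.2 ⟨hcard, h.1, h.2.1, h.2.2.1, h.2.2.2⟩⟩, ?_⟩
        exact heq.symm
    rw [h1, ← h2, Finset.card_product, Finset.card_univ, Fintype.card_bool,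
      CountMin.card_Tc m k CountMin.card_Dom]
    have hch : (m - k - 2).choose (k+1) = (m - k - 2).choose ℓ := by
      rw [show k + 1 = (m - k - 2) - ℓ by omega]
      exact Nat.choose_symm (by omega)
    rw [hch, show (m + ℓ - 1) / 2 = m - k - 2 by omega,
      show m - ℓ - 1 = 2 * (k + 1) by omega]
    ring
end

section
/- (Donnelly–Dunkum–Huber–Knupp) For $m \geq 2$, the set of roots of the sign-alternating Fibonacci polynomial $G_m(s) = \sum_{j=0}^{\lfloor m/2 \rfloor} (-1)^j \binom{m-j}{j} s^{\lfloor m/2 \rfloor - j}$ is $\{4\cos^2(j\pi/(m+1)) : 1 \leq j \leq \lfloor m/2 \rfloor\}$. -/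
/-! Under `s = x²`, `x ^ (m % 2) * G_m(x²)` is the Vieta–Fibonacci polynomial `S_m(x)` (the
Chebyshev polynomial `U_m(x / 2)`), since both satisfy `P_{m+2} = x P_{m+1} - P_m`. As
`S_m(2 cos θ) sin θ = sin((m + 1) θ)`, every `4 cos²(jπ/(m+1))` with `1 ≤ j ≤ ⌊m/2⌋` is a root of
`G_m`. These are `⌊m/2⌋` distinct numbers and `G_m` is monic of degree `⌊m/2⌋`, so there are no
other roots. -/

open Real

/-- The sign-alternating Fibonacci polynomial
`G_m(s) = ∑_{j=0}^{⌊m/2⌋} (-1)^j C(m-j, j) s^{⌊m/2⌋-j}`. -/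
noncomputable def signAltFib (m : ℕ) (s : ℝ) : ℝ :=
  ∑ j ∈ Finset.range (m / 2 + 1), (-1 : ℝ) ^ j * ((m - j).choose j : ℝ) * s ^ (m / 2 - j)

open Finset Polynomial

namespace Polynomial.Chebyshev

variable {R : Type*} [CommRing R]

-- The exponent `m - 2 * j` truncates only when `2 * j > m`, where the binomial factor vanishes.
def vietaFibTerm (m j : ℕ) (x : R) : R := (-1) ^ j * ((m - j).choose j : R) * x ^ (m - 2 * j)

theorem vietaFibTerm_eq_zero {m j : ℕ} (h : m / 2 < j) (x : R) : vietaFibTerm m j x = 0 := by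
  simp [vietaFibTerm, Nat.choose_eq_zero_of_lt (show m - j < j by omega)]

theorem sum_range_vietaFibTerm_of_le {m N : ℕ} (h : m / 2 < N) (x : R) :
    ∑ j ∈ range N, vietaFibTerm m j x = ∑ j ∈ range (m / 2 + 1), vietaFibTerm m j x :=
  (sum_subset (range_subset_range.2 h) fun j _ hj ↦
    vietaFibTerm_eq_zero (by simpa using hj) x).symm

theorem vietaFibTerm_add_two_succ (m j : ℕ) (x : R) :
    vietaFibTerm (m + 2) (j + 1) x = x * vietaFibTerm (m + 1) (j + 1) x - vietaFibTerm m j x := by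
  unfold vietaFibTerm
  obtain h | rfl | h := lt_trichotomy (2 * j) m
  · obtain ⟨k, rfl⟩ := exists_add_of_le (Nat.succ_le_of_lt h)
    rw [show 2 * j + 1 + k + 2 - (j + 1) = (j + k + 1) + 1 by omega,
      show 2 * j + 1 + k + 1 - (j + 1) = j + k + 1 by omega,
      show 2 * j + 1 + k - j = j + k + 1 by omega, Nat.choose_succ_succ', Nat.cast_add,
      show 2 * j + 1 + k + 2 - 2 * (j + 1) = k + 1 by omega,
      show 2 * j + 1 + k + 1 - 2 * (j + 1) = k by omega,
      show 2 * j + 1 + k - 2 * j = k + 1 by omega]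
    ring
  · rw [show 2 * j + 2 - (j + 1) = j + 1 by omega, show 2 * j + 1 - (j + 1) = j by omega,
      show 2 * j - j = j by omega, show 2 * j + 2 - 2 * (j + 1) = 0 by omega]
    simp [pow_succ]
  · rw [Nat.choose_eq_zero_of_lt (show m + 2 - (j + 1) < j + 1 by omega),
      Nat.choose_eq_zero_of_lt (show m + 1 - (j + 1) < j + 1 by omega),
      Nat.choose_eq_zero_of_lt (show m - j < j by omega)]
    simp

theorem vietaFibTerm_zero (m : ℕ) (x : R) : vietaFibTerm m 0 x = x ^ m := by
  simp [vietaFibTerm]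

theorem S_eval_natCast_eq_sum (m : ℕ) (x : R) :
    (S R m).eval x = ∑ j ∈ range (m / 2 + 1), vietaFibTerm m j x := by
  induction m using Nat.twoStepInduction with
  | zero => simp [vietaFibTerm]
  | one => simp [vietaFibTerm]
  | more m ih₀ ih₁ =>
    have hS : (S R ↑(m + 2)).eval x = x * (S R ↑(m + 1)).eval x - (S R m).eval x := by
      simp [S_add_two]
    have h₂ : ∑ j ∈ range ((m + 2) / 2 + 1), vietaFibTerm (m + 2) j x =
        x ^ (m + 2) + ∑ j ∈ range (m / 2 + 1), vietaFibTerm (m + 2) (j + 1) x := by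
      rw [show (m + 2) / 2 + 1 = m / 2 + 1 + 1 by omega, sum_range_succ', vietaFibTerm_zero,
        add_comm]
    have h₁ : ∑ j ∈ range ((m + 1) / 2 + 1), vietaFibTerm (m + 1) j x =
        x ^ (m + 1) + ∑ j ∈ range (m / 2 + 1), vietaFibTerm (m + 1) (j + 1) x := by
      rw [← sum_range_vietaFibTerm_of_le (N := m / 2 + 1 + 1) (by omega), sum_range_succ',
        vietaFibTerm_zero, add_comm]
    rw [hS, ih₀, ih₁, h₁, h₂]
    simp only [vietaFibTerm_add_two_succ, sum_sub_distrib, mul_add, mul_sum]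
    ring

end Polynomial.Chebyshev

theorem pow_mod_two_mul_signAltFib_sq (m : ℕ) (x : ℝ) :
    x ^ (m % 2) * signAltFib m (x ^ 2) = (Chebyshev.S ℝ m).eval x := by
  rw [Chebyshev.S_eval_natCast_eq_sum, signAltFib, mul_sum]
  refine sum_congr rfl fun j hj ↦ ?_
  have hj : j ≤ m / 2 := Nat.lt_succ_iff.1 (mem_range.1 hj)
  rw [Chebyshev.vietaFibTerm, ← pow_mul, show m - 2 * j = m % 2 + 2 * (m / 2 - j) by omega,
    pow_add]
  ring

theorem mul_pi_div_mem_Ioo {m j : ℕ} (hj₁ : 1 ≤ j) (hj : j ≤ m / 2) :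
    (j : ℝ) * π / (m + 1) ∈ Set.Ioo 0 (π / 2) := by
  have hj₁ : (1 : ℝ) ≤ j := by exact_mod_cast hj₁
  have hj : 2 * (j : ℝ) ≤ m := by exact_mod_cast (show 2 * j ≤ m by omega)
  constructor
  · positivity
  · rw [div_lt_div_iff₀ (by positivity) two_pos]
    nlinarith [pi_pos]

theorem signAltFib_four_mul_cos_sq_eq_zero {m j : ℕ} (hj₁ : 1 ≤ j) (hj : j ≤ m / 2) :
    signAltFib m (4 * cos (j * π / (m + 1)) ^ 2) = 0 := by
  set θ := (j : ℝ) * π / (m + 1) with hθ_def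
  obtain ⟨hθ₀, hθ⟩ := mul_pi_div_mem_Ioo hj₁ hj
  have hS : (Chebyshev.S ℝ m).eval (2 * cos θ) = 0 := by
    have h := Chebyshev.S_two_mul_real_cos θ m
    rw [show ((m : ℤ) + 1 : ℝ) * θ = j * π by rw [hθ_def]; push_cast; field_simp,
      sin_nat_mul_pi] at h
    exact (mul_eq_zero.1 h).resolve_right (sin_pos_of_pos_of_lt_pi hθ₀ (by linarith)).ne'
  have hx : 2 * cos θ ≠ 0 := (mul_pos two_pos (cos_pos_of_mem_Ioo ⟨by linarith, hθ⟩)).ne'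
  have h := pow_mod_two_mul_signAltFib_sq m (2 * cos θ)
  rwa [hS, mul_eq_zero, or_iff_right (pow_ne_zero _ hx), mul_pow,
    show (2 : ℝ) ^ 2 = 4 by norm_num] at h

theorem injOn_four_mul_cos_sq : Set.InjOn (fun θ ↦ 4 * cos θ ^ 2) (Set.Icc 0 (π / 2)) := by
  intro a ha b hb hab
  have hcos : ∀ θ ∈ Set.Icc 0 (π / 2), 0 ≤ cos θ := fun θ hθ ↦
    cos_nonneg_of_mem_Icc ⟨by linarith [hθ.1, pi_pos], hθ.2⟩
  refine injOn_cos ⟨ha.1, by linarith [ha.2, pi_pos]⟩ ⟨hb.1, by linarith [hb.2, pi_pos]⟩ ?_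
  simpa [pow_left_inj₀ (hcos a ha) (hcos b hb)] using hab

noncomputable def signAltFibPoly (m : ℕ) : ℝ[X] :=
  ∑ j ∈ range (m / 2 + 1), C ((-1) ^ j * ((m - j).choose j : ℝ)) * X ^ (m / 2 - j)

theorem eval_signAltFibPoly (m : ℕ) (s : ℝ) : (signAltFibPoly m).eval s = signAltFib m s := by
  simp [signAltFibPoly, signAltFib, eval_finsetSum]

theorem natDegree_signAltFibPoly_le (m : ℕ) : (signAltFibPoly m).natDegree ≤ m / 2 :=
  natDegree_sum_le_of_forall_le _ _ fun _ _ ↦ (natDegree_C_mul_X_pow_le _ _).trans (Nat.sub_le _ _)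

theorem monic_signAltFibPoly (m : ℕ) : (signAltFibPoly m).Monic := by
  refine monic_of_natDegree_le_of_coeff_eq_one _ (natDegree_signAltFibPoly_le m) ?_
  rw [signAltFibPoly, finsetSum_coeff, sum_eq_single_of_mem 0 (by simp)]
  · simp
  · intro j hj hj₀
    rw [coeff_C_mul_X_pow, if_neg (by have := mem_range.1 hj; omega)]

theorem roots_signAltFibPoly (m : ℕ) :
    (signAltFibPoly m).roots =
      ((Icc 1 (m / 2)).image fun j : ℕ ↦ 4 * cos (j * π / (m + 1)) ^ 2).val := by
  have hinj : Set.InjOn (fun j : ℕ ↦ 4 * cos (j * π / (m + 1)) ^ 2) (Icc 1 (m / 2)) := by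
    refine injOn_four_mul_cos_sq.comp (fun a _ b _ h ↦ ?_) fun j hj ↦ ?_
    · have : (m : ℝ) + 1 ≠ 0 := by positivity
      exact_mod_cast (mul_left_inj' pi_ne_zero).1 ((div_left_inj' this).1 h)
    · obtain ⟨hj₁, hj⟩ := mem_Icc.1 hj
      exact Set.Ioo_subset_Icc_self (mul_pi_div_mem_Ioo hj₁ hj)
  refine roots_eq_of_natDegree_le_card_of_ne_zero ?_ ?_ (monic_signAltFibPoly m).ne_zero
  · simp only [mem_image, mem_Icc]
    rintro _ ⟨j, ⟨hj₁, hj⟩, rfl⟩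
    rw [eval_signAltFibPoly, signAltFib_four_mul_cos_sq_eq_zero hj₁ hj]
  · rw [card_image_of_injOn hinj, Nat.card_Icc, Nat.add_sub_cancel]
    exact natDegree_signAltFibPoly_le m

theorem signAltFib_roots_general (m : ℕ) :
    {s : ℝ | signAltFib m s = 0} =
      {s : ℝ | ∃ j : ℕ, 1 ≤ j ∧ j ≤ m / 2 ∧ s = 4 * Real.cos (j * π / (m + 1)) ^ 2} := by
  ext s
  rw [Set.mem_ofPred_eq, ← eval_signAltFibPoly, ← IsRoot.def,
    ← mem_roots (monic_signAltFibPoly m).ne_zero, roots_signAltFibPoly]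
  simp [eq_comm, and_assoc]

/-- (Donnelly–Dunkum–Huber–Knupp) For `m ≥ 2`, the set of roots of the sign-alternating
Fibonacci polynomial `G_m` is `{4cos²(jπ/(m+1)) : 1 ≤ j ≤ ⌊m/2⌋}`. -/
theorem signAltFib_roots (m : ℕ) (hm : 2 ≤ m) :
    {s : ℝ | signAltFib m s = 0} =
      {s : ℝ | ∃ j : ℕ, 1 ≤ j ∧ j ≤ m / 2 ∧ s = 4 * Real.cos (j * π / (m + 1)) ^ 2} :=
  signAltFib_roots_general m
end
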